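/- arXiv:1409.8447 — 9 statements merged into one kernel-verified Lean document; each statement's English description precedes it below -/
import Mathlib

section
/- The real Waring rank of the binary cubic form 2x³ − 6xy² is exactly 3, i.e., it can be written as a signed sum of 3 cubes of real linear forms but not of 2 or fewer. -/
/-- A binary form given as a function, decomposed as a signed combination of `r` cubes
of real linear forms. -/
def HasBinaryCubeDecomp (f : ℝ → ℝ → ℝ) (r : ℕ) : Prop :=
  ∃ (c : Fin r → ℝ) (a b : Fin r → ℝ),
    ∀ x y : ℝ, f x y = ∑ i, c i * (a i * x + b i * y) ^ 3

/-- A single signed cube cannot have coefficient pattern `(2, 0, -2)`. -/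
lemma single_cube_contra (c a b : ℝ) (e0 : c * a ^ 3 = 2) (e1 : c * a ^ 2 * b = 0)
    (e2 : c * a * b ^ 2 = -2) : False := by
  have h : (c * a ^ 3) * (c * a * b ^ 2) = 2 * (-2) := by rw [e0, e2]
  have h2 : (c * a ^ 2 * b) ^ 2 = 0 := by rw [e1]; ring
  have h3 : (c * a ^ 3) * (c * a * b ^ 2) = (c * a ^ 2 * b) ^ 2 := by ring
  nlinarith [h, h2, h3]

theorem real_rank_three_of_two_x3_minus_6xy2 :
    HasBinaryCubeDecomp (fun x y => 2 * x ^ 3 - 6 * x * y ^ 2) 3 ∧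
    ¬ HasBinaryCubeDecomp (fun x y => 2 * x ^ 3 - 6 * x * y ^ 2) 2 := by
  constructor
  · refine ⟨![4, -1, -1], ![1, 1, 1], ![0, 1, -1], ?_⟩
    intro x y
    simp [Fin.sum_univ_three]
    ring
  · rintro ⟨c, a, b, h⟩
    have h10 := h 1 0
    have h01 := h 0 1
    have h11 := h 1 1
    have h1m := h 1 (-1)
    simp [Fin.sum_univ_two] at h10 h01 h11 h1m
    set c1 := c 0; set c2 := c 1
    set a1 := a 0; set a2 := a 1
    set b1 := b 0; set b2 := b 1
    -- coefficient equations
    have E0 : c1 * a1 ^ 3 + c2 * a2 ^ 3 = 2 := by linear_combination -h10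
    have E3 : c1 * b1 ^ 3 + c2 * b2 ^ 3 = 0 := by linear_combination -h01
    have E1 : c1 * a1 ^ 2 * b1 + c2 * a2 ^ 2 * b2 = 0 := by
      linear_combination (-h11 + h1m - 2 * E3) / 6
    have E2 : c1 * a1 * b1 ^ 2 + c2 * a2 * b2 ^ 2 = -2 := by
      linear_combination (-h11 - h1m - 2 * E0) / 6
    -- apolarity relations
    have hP : a1 * a2 - b1 * b2 = 0 := by
      linear_combination (b1 * b2 / 2) * E0 - ((a1 * b2 + a2 * b1) / 2) * E1 +
        (a1 * a2 / 2) * E2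
    have hQ : a1 * b2 + a2 * b1 = 0 := by
      linear_combination -(b1 * b2 / 2) * E1 + ((a1 * b2 + a2 * b1) / 2) * E2 -
        (a1 * a2 / 2) * E3
    have ha2 : a2 * (a1 ^ 2 + b1 ^ 2) = 0 := by linear_combination a1 * hP + b1 * hQ
    have hb2 : b2 * (a1 ^ 2 + b1 ^ 2) = 0 := by linear_combination -b1 * hP + a1 * hQ
    rcases mul_eq_zero.mp ha2 with h20 | h1sq
    · -- a2 = 0
      rcases mul_eq_zero.mp hb2 with hb20 | h1sq
      · -- a2 = 0 and b2 = 0 : single cube c1 (a1 x + b1 y)^3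
        exact single_cube_contra c1 a1 b1
          (by linear_combination E0 - c2 * a2 ^ 2 * h20)
          (by linear_combination E1 - c2 * a2 * b2 * h20)
          (by linear_combination E2 - c2 * b2 ^ 2 * h20)
      · have ha10 : a1 = 0 := by nlinarith [sq_nonneg a1, sq_nonneg b1]
        have hb10 : b1 = 0 := by nlinarith [sq_nonneg a1, sq_nonneg b1]
        exact single_cube_contra c2 a2 b2
          (by linear_combination E0 - c1 * a1 ^ 2 * ha10)
          (by linear_combination E1 - c1 * a1 * b1 * ha10)
          (by linear_combination E2 - c1 * b1 ^ 2 * ha10)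
    · have ha10 : a1 = 0 := by nlinarith [sq_nonneg a1, sq_nonneg b1]
      have hb10 : b1 = 0 := by nlinarith [sq_nonneg a1, sq_nonneg b1]
      exact single_cube_contra c2 a2 b2
        (by linear_combination E0 - c1 * a1 ^ 2 * ha10)
        (by linear_combination E1 - c1 * a1 * b1 * ha10)
        (by linear_combination E2 - c1 * b1 ^ 2 * ha10)
end

section
/- Every binary cubic of the form x(x²−y²) has real Waring rank 3: it is a sum of three signed cubes of real linear forms, and cannot be written as a real linear combination of two cubes of real linear forms. -/
theorem real_rank_three_concurrent_lines :
    HasBinaryCubeDecomp (fun x y => x * (x ^ 2 - y ^ 2)) 3 ∧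
    ¬ HasBinaryCubeDecomp (fun x y => x * (x ^ 2 - y ^ 2)) 2 := by
  constructor
  · refine ⟨![4/3, -1/6, -1/6], ![1, 1, 1], ![0, 1, -1], fun x y => ?_⟩
    simp [Fin.sum_univ_three]
    ring
  · rintro ⟨c, a, b, h⟩
    set p := c 0 with hp
    set q := c 1 with hq
    set a₁ := a 0 with ha1
    set a₂ := a 1 with ha2
    set b₁ := b 0 with hb1
    set b₂ := b 1 with hb2
    have h10 := h 1 0
    have h01 := h 0 1
    have h11 := h 1 1
    have h1m := h 1 (-1)
    simp only [Fin.sum_univ_two] at h10 h01 h11 h1m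
    -- coefficient equations
    have e0 : p * a₁ ^ 3 + q * a₂ ^ 3 = 1 := by linear_combination -h10
    have e3 : p * b₁ ^ 3 + q * b₂ ^ 3 = 0 := by linear_combination -h01
    have e1 : p * a₁ ^ 2 * b₁ + q * a₂ ^ 2 * b₂ = 0 := by
      linear_combination (-h11 + h1m + 2 * h01) / 6
    have e2 : p * a₁ * b₁ ^ 2 + q * a₂ * b₂ ^ 2 = -(1/3) := by
      linear_combination (-h11 - h1m + 2 * h10) / 6
    set D := a₁ * b₂ - a₂ * b₁ with hD
    have h1 : p * q * D ^ 2 * (a₁ * a₂) = -(1/3) := by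
      linear_combination (p * a₁ * b₁ ^ 2 + q * a₂ * b₂ ^ 2) * e0 + e2
        - (p * a₁ ^ 2 * b₁ + q * a₂ ^ 2 * b₂) * e1
    have h2 : p * q * D ^ 2 * (b₁ * b₂) = -(1/9) := by
      linear_combination (p * b₁ ^ 3 + q * b₂ ^ 3) * e1
        - (p * a₁ * b₁ ^ 2 + q * a₂ * b₂ ^ 2 - 1/3) * e2
    have h3 : p * q * D ^ 2 * (a₁ * b₂ + a₂ * b₁) = 0 := by
      linear_combination (p * b₁ ^ 3 + q * b₂ ^ 3) * e0 + e3
        - (p * a₁ * b₁ ^ 2 + q * a₂ * b₂ ^ 2) * e1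
    have hprod : (p * q * D ^ 2 * (a₁ * b₂)) * (p * q * D ^ 2 * (a₂ * b₁)) = 1/27 := by
      linear_combination (p * q * D ^ 2 * (b₁ * b₂)) * h1 - (1/3) * h2
    have key : (p * q * D ^ 2 * (a₁ * b₂)) ^ 2 = -(1/27) := by
      linear_combination (p * q * D ^ 2 * (a₁ * b₂)) * h3 - hprod
    nlinarith [sq_nonneg (p * q * D ^ 2 * (a₁ * b₂))]
end

section
/- The binary cubic x²y cannot be written as a real linear combination of two cubes of real linear forms (its real Waring rank is 3). -/
theorem x2y_not_two_cubes :
    ¬ HasBinaryCubeDecomp (fun x y => x ^ 2 * y) 2 := by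
  rintro ⟨c, a, b, h⟩
  have h' : ∀ x y : ℝ, x ^ 2 * y =
      c 0 * (a 0 * x + b 0 * y) ^ 3 + c 1 * (a 1 * x + b 1 * y) ^ 3 := by
    intro x y
    simpa [Fin.sum_univ_two] using h x y
  -- coefficient equations
  have e30 : c 0 * a 0 ^ 3 + c 1 * a 1 ^ 3 = 0 := by linear_combination -(h' 1 0)
  have e03 : c 0 * b 0 ^ 3 + c 1 * b 1 ^ 3 = 0 := by linear_combination -(h' 0 1)
  have e21 : c 0 * a 0 ^ 2 * b 0 + c 1 * a 1 ^ 2 * b 1 = 1 / 3 := by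
    linear_combination (-(1:ℝ)/6) * h' 1 1 + ((1:ℝ)/6) * h' 1 (-1) - ((1:ℝ)/3) * e03
  have e12 : c 0 * a 0 * b 0 ^ 2 + c 1 * a 1 * b 1 ^ 2 = 0 := by
    linear_combination (-(1:ℝ)/6) * h' 1 1 - ((1:ℝ)/6) * h' 1 (-1) - ((1:ℝ)/3) * e30
  set D : ℝ := a 0 * b 1 - a 1 * b 0 with hD
  have k1 : c 0 * b 0 ^ 2 * D = 0 := by linear_combination b 1 * e12 - a 1 * e03
  have k2 : c 1 * b 1 ^ 2 * D = 0 := by linear_combination a 0 * e03 - b 0 * e12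
  have k3 : c 0 * a 0 ^ 2 * D = -a 1 / 3 := by linear_combination b 1 * e30 - a 1 * e21
  have k4 : c 1 * a 1 ^ 2 * D = a 0 / 3 := by linear_combination a 0 * e21 - b 0 * e30
  have sq0 : (c 0 * a 0 * b 0 * D) ^ 2 = 0 := by
    linear_combination (c 0 * a 0 ^ 2 * D) * k1
  have sq1 : (c 1 * a 1 * b 1 * D) ^ 2 = 0 := by
    linear_combination (c 1 * a 1 ^ 2 * D) * k2
  have m0 : c 0 * a 0 * b 0 * D = 0 :=
    pow_eq_zero_iff (two_ne_zero) |>.mp sq0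
  have m1 : c 1 * a 1 * b 1 * D = 0 :=
    pow_eq_zero_iff (two_ne_zero) |>.mp sq1
  have Dz : D = 0 := by linear_combination (-3) * D * e21 + 3 * a 0 * m0 + 3 * a 1 * m1
  have a1z : a 1 = 0 := by linear_combination 3 * k3 - 3 * c 0 * a 0 ^ 2 * Dz
  have a0z : a 0 = 0 := by linear_combination (-3 : ℝ) * k4 + 3 * c 1 * a 1 ^ 2 * Dz
  rw [a0z, a1z] at e21
  norm_num at e21
end

section
/- For λ with 2λ+1 ≠ 0, the Hesse cubic F_λ = x³+y³+z³+6λxyz admits the decomposition F_λ = c₀(x+y+z)³ + c₁((1+λ)x−λy−λz)³ + c₂(−λx+(1+λ)y−λz)³ + c₃(−λx−λy+(1+λ)z)³ with c₀ = λ(λ²+λ+1)/(2λ+1)² and c₁=c₂=c₃ = 1/(2λ+1)². -/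
theorem sq_two_mul_add_one_mul_hesse_cubic {R : Type*} [CommRing R] (lam x y z : R) :
    (2 * lam + 1) ^ 2 * (x ^ 3 + y ^ 3 + z ^ 3 + 6 * lam * (x * y * z)) =
      lam * (lam ^ 2 + lam + 1) * (x + y + z) ^ 3
        + ((1 + lam) * x - lam * y - lam * z) ^ 3
        + (-lam * x + (1 + lam) * y - lam * z) ^ 3
        + (-lam * x - lam * y + (1 + lam) * z) ^ 3 := by
  ring

theorem hesse_pencil_decomposition (lam : ℝ) (h : 2 * lam + 1 ≠ 0) :
    ∀ x y z : ℝ,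
      x ^ 3 + y ^ 3 + z ^ 3 + 6 * lam * (x * y * z) =
        (lam * (lam ^ 2 + lam + 1) / (2 * lam + 1) ^ 2) * (x + y + z) ^ 3
          + (1 / (2 * lam + 1) ^ 2) * ((1 + lam) * x - lam * y - lam * z) ^ 3
          + (1 / (2 * lam + 1) ^ 2) * (-lam * x + (1 + lam) * y - lam * z) ^ 3
          + (1 / (2 * lam + 1) ^ 2) * (-lam * x - lam * y + (1 + lam) * z) ^ 3 := by
  intro x y z
  have hsq : (2 * lam + 1) ^ 2 ≠ 0 := pow_ne_zero 2 h
  rw [← mul_right_inj' hsq, sq_two_mul_add_one_mul_hesse_cubic]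
  simp only [mul_add, ← mul_assoc, mul_div_cancel₀ _ hsq, one_mul]
end

section
/- The cubic (x²+y²+z²)x admits the decomposition (x²+y²+z²)x = (1/6)[(z+x)³ − (z−x)³] + (1/(6√2))(√2·x−y)³ − (1/(6√2))(−√2·x−y)³, hence has real Waring rank at most 4. -/
def HasTernaryCubeDecomp (f : ℝ → ℝ → ℝ → ℝ) (r : ℕ) : Prop :=
  ∃ (c : Fin r → ℝ) (a b d : Fin r → ℝ),
    ∀ x y z : ℝ, f x y z = ∑ i, c i * (a i * x + b i * y + d i * z) ^ 3

theorem imaginary_conic_plus_line_decomposition :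
    (∀ x y z : ℝ,
      (x ^ 2 + y ^ 2 + z ^ 2) * x =
        (1 / 6) * ((z + x) ^ 3 - (z - x) ^ 3)
          + (1 / (6 * Real.sqrt 2)) * (Real.sqrt 2 * x - y) ^ 3
          - (1 / (6 * Real.sqrt 2)) * (-(Real.sqrt 2) * x - y) ^ 3) ∧
    HasTernaryCubeDecomp (fun x y z => (x ^ 2 + y ^ 2 + z ^ 2) * x) 4 := by
  have hs : Real.sqrt 2 ^ 2 = 2 := Real.sq_sqrt (by norm_num)
  have hs0 : Real.sqrt 2 ≠ 0 := by positivity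
  have h1 : ∀ x y z : ℝ,
      (x ^ 2 + y ^ 2 + z ^ 2) * x =
        (1 / 6) * ((z + x) ^ 3 - (z - x) ^ 3)
          + (1 / (6 * Real.sqrt 2)) * (Real.sqrt 2 * x - y) ^ 3
          - (1 / (6 * Real.sqrt 2)) * (-(Real.sqrt 2) * x - y) ^ 3 := by
    intro x y z
    have key : (1:ℝ)/(6*Real.sqrt 2) = Real.sqrt 2 / 12 := by
      rw [div_eq_div_iff (by positivity) (by norm_num)]
      nlinarith [hs]
    rw [key]
    linear_combination (-((Real.sqrt 2^2+2)*x^3/6 + x*y^2/2)) * hs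
  refine ⟨h1, ![1/6, -(1/6), 1/(6*Real.sqrt 2), -(1/(6*Real.sqrt 2))],
    ![1, -1, Real.sqrt 2, -Real.sqrt 2], ![0, 0, -1, -1], ![1, 1, 0, 0], ?_⟩
  intro x y z
  show (x ^ 2 + y ^ 2 + z ^ 2) * x = _
  rw [h1 x y z]
  simp [Fin.sum_univ_four]
  ring
end

section
/- The cubic F = (x²+y²−z²)z equals (1/6)[(x+z)³ − (x−z)³] + (1/6)(y+z)³ − (1/6)(y−z)³ − (5/3)z³, hence its real Waring rank is at most 5. -/
theorem conic_external_line_decomposition :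
    (∀ x y z : ℝ,
      (x ^ 2 + y ^ 2 - z ^ 2) * z =
        (1 / 6) * ((x + z) ^ 3 - (x - z) ^ 3)
          + (1 / 6) * (y + z) ^ 3 - (1 / 6) * (y - z) ^ 3 - (5 / 3) * z ^ 3) ∧
    HasTernaryCubeDecomp (fun x y z => (x ^ 2 + y ^ 2 - z ^ 2) * z) 5 := by
  constructor
  · intro x y z; ring
  · refine ⟨![1/6, -(1/6), 1/6, -(1/6), -(5/3)],
      ![1, 1, 0, 0, 0], ![0, 0, 1, 1, 0], ![1, -1, 1, -1, 1], fun x y z => ?_⟩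
    simp [Fin.sum_univ_five]
    ring
end

section
/- The real Waring rank of F = (x²+y²−z²)z is exactly 5: F cannot be written as a real linear combination of 4 cubes of real linear forms. -/
set_option maxHeartbeats 1000000

lemma conic_pair (a1 b1 d1 a2 b2 d2 : ℝ)
    (h1 : a1*b1*(3*a2^2+d2^2) = a2*b2*(3*a1^2+d1^2))
    (h2 : (a1^2-b1^2)*(3*a2^2+d2^2) = (a2^2-b2^2)*(3*a1^2+d1^2)) :
    a1*b2 = a2*b1 := by
  by_cases hs1 : 3*a1^2+d1^2 = 0
  · have ha1 : a1 = 0 := by nlinarith [sq_nonneg a1, sq_nonneg d1]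
    have hb1 : b1^2*(3*a2^2+d2^2) = 0 := by
      have := h2; rw [hs1] at this; nlinarith [this]
    rcases mul_eq_zero.mp hb1 with hb | hs2
    · have : b1 = 0 := by nlinarith [sq_nonneg b1]
      simp [ha1, this]
    · have ha2 : a2 = 0 := by nlinarith [sq_nonneg a2, sq_nonneg d2]
      simp [ha1, ha2]
  · by_cases hs2 : 3*a2^2+d2^2 = 0
    · have ha2 : a2 = 0 := by nlinarith [sq_nonneg a2, sq_nonneg d2]
      have hd2 : d2 = 0 := by nlinarith [sq_nonneg a2, sq_nonneg d2]
      have hb2 : b2^2*(3*a1^2+d1^2) = 0 := by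
        rw [ha2, hd2] at h2; nlinarith [h2]
      have : b2 = 0 := by
        rcases mul_eq_zero.mp hb2 with h | h
        · nlinarith [sq_nonneg b2]
        · exact absurd h hs1
      simp [ha2, this]
    · -- both positive
      have hp1 : 0 < 3*a1^2+d1^2 := lt_of_le_of_ne (by positivity) (Ne.symm hs1)
      have hp2 : 0 < 3*a2^2+d2^2 := lt_of_le_of_ne (by positivity) (Ne.symm hs2)
      set s1 : ℝ := 3*a1^2+d1^2 with hs1d
      set s2 : ℝ := 3*a2^2+d2^2 with hs2d
      have hkey : (a1^2*s2 - a2^2*s1) * (a1^2*s2 + a2^2*s1 - (a1^2-b1^2)*s2) = 0 := by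
        linear_combination (a1*b1*s2 + a2*b2*s1)*h1 + (a2^2*s1)*h2
      rcases mul_eq_zero.mp hkey with hXY | hM
      · have hsq : (a1*b2 - a2*b1)^2 * (s1*s2) = 0 := by
          linear_combination (a1^2*s2)*h2 + 2*(a1*b1*s2)*h1 - (2*a1^2*s2 - (a1^2-b1^2)*s2)*hXY
        have : (a1*b2 - a2*b1)^2 = 0 := by
          rcases mul_eq_zero.mp hsq with h | h
          · exact h
          · nlinarith
        have := pow_eq_zero_iff (n := 2) (by norm_num) |>.mp this
        linarith
      · have hXYP : (a1^2*s2)*(a2^2*s1) + (a1*b1*s2)^2 = 0 := by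
          linear_combination (a1^2*s2) * hM
        have hX : (0:ℝ) ≤ a1^2*s2 := by positivity
        have hY : (0:ℝ) ≤ a2^2*s1 := by positivity
        have hP : a1*b1*s2 = 0 := by nlinarith [sq_nonneg (a1*b1*s2), mul_nonneg hX hY]
        have hab1 : a1*b1 = 0 := by
          rcases mul_eq_zero.mp hP with h | h
          · exact h
          · exact absurd h hp2.ne'
        have hab2 : a2*b2 = 0 := by
          have h' : a2*b2*s1 = 0 := by linear_combination -h1 + s2*hab1
          rcases mul_eq_zero.mp h' with h | h
          · exact h
          · exact absurd h hp1.ne'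
        have hXY0 : a1^2*s2*(a2^2*s1) = 0 := by nlinarith [sq_nonneg (a1*b1*s2)]
        have ha : a1 = 0 ∨ a2 = 0 := by
          rcases mul_eq_zero.mp hXY0 with h | h
          · left
            rcases mul_eq_zero.mp h with h' | h'
            · exact pow_eq_zero_iff (n := 2) (by norm_num) |>.mp h'
            · exact absurd h' hp2.ne'
          · right
            rcases mul_eq_zero.mp h with h' | h'
            · exact pow_eq_zero_iff (n := 2) (by norm_num) |>.mp h'
            · exact absurd h' hp1.ne'
        rcases ha with ha1 | ha2
        · -- goal a1*b2 = a2*b1, a1 = 0; show a2*b1 = 0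
          rw [ha1]
          by_cases ha2 : a2 = 0
          · rw [ha2]; ring
          · -- b2 = 0 from hab2; contradiction via h2
            have hb2 : b2 = 0 := by
              rcases mul_eq_zero.mp hab2 with h | h
              · exact absurd h ha2
              · exact h
            exfalso
            rw [ha1, hb2] at h2
            have hpos : 0 < a2^2*s1 := by positivity
            have hnn : 0 ≤ b1^2*s2 := by positivity
            nlinarith [h2]
        · rw [ha2]
          by_cases ha1 : a1 = 0
          · rw [ha1]; ring
          · have hb1 : b1 = 0 := by
              rcases mul_eq_zero.mp hab1 with h | h
              · exact absurd h ha1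
              · exact h
            exfalso
            rw [ha2, hb1] at h2
            have hpos : 0 < a1^2*s2 := by positivity
            have hnn : 0 ≤ b2^2*s1 := by positivity
            nlinarith [h2]

lemma ker4 (x1 y1 z1 x2 y2 z2 x3 y3 z3 x4 y4 z4 t1 t2 t3 t4 s1 s2 s3 s4 : ℝ)
    (hD : x1*(y2*z3-z2*y3) - y1*(x2*z3-z2*x3) + z1*(x2*y3-y2*x3) ≠ 0)
    (ht1 : t1*x1 + t2*x2 + t3*x3 + t4*x4 = 0)
    (ht2 : t1*y1 + t2*y2 + t3*y3 + t4*y4 = 0)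
    (ht3 : t1*z1 + t2*z2 + t3*z3 + t4*z4 = 0)
    (hs1 : s1*x1 + s2*x2 + s3*x3 + s4*x4 = 0)
    (hs2 : s1*y1 + s2*y2 + s3*y3 + s4*y4 = 0)
    (hs3 : s1*z1 + s2*z2 + s3*z3 + s4*z4 = 0) :
    t1*s2 = t2*s1 ∧ t1*s3 = t3*s1 ∧ t1*s4 = t4*s1 ∧
    t2*s3 = t3*s2 ∧ t2*s4 = t4*s2 ∧ t3*s4 = t4*s3 := by
  have c1 : t1*(x1*(y2*z3-z2*y3) - y1*(x2*z3-z2*x3) + z1*(x2*y3-y2*x3))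
      = t4*(-(x4*(y2*z3-z2*y3) - y4*(x2*z3-z2*x3) + z4*(x2*y3-y2*x3))) := by
    linear_combination (y2*z3-z2*y3)*ht1 - (x2*z3-z2*x3)*ht2 + (x2*y3-y2*x3)*ht3
  have c2 : t2*(x1*(y2*z3-z2*y3) - y1*(x2*z3-z2*x3) + z1*(x2*y3-y2*x3))
      = t4*(x4*(y1*z3-z1*y3) - y4*(x1*z3-z1*x3) + z4*(x1*y3-y1*x3)) := by
    linear_combination -((y1*z3-z1*y3)*ht1 - (x1*z3-z1*x3)*ht2 + (x1*y3-y1*x3)*ht3)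
  have c3 : t3*(x1*(y2*z3-z2*y3) - y1*(x2*z3-z2*x3) + z1*(x2*y3-y2*x3))
      = t4*(-(x4*(y1*z2-z1*y2) - y4*(x1*z2-z1*x2) + z4*(x1*y2-y1*x2))) := by
    linear_combination (y1*z2-z1*y2)*ht1 - (x1*z2-z1*x2)*ht2 + (x1*y2-y1*x2)*ht3
  have d1 : s1*(x1*(y2*z3-z2*y3) - y1*(x2*z3-z2*x3) + z1*(x2*y3-y2*x3))
      = s4*(-(x4*(y2*z3-z2*y3) - y4*(x2*z3-z2*x3) + z4*(x2*y3-y2*x3))) := by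
    linear_combination (y2*z3-z2*y3)*hs1 - (x2*z3-z2*x3)*hs2 + (x2*y3-y2*x3)*hs3
  have d2 : s2*(x1*(y2*z3-z2*y3) - y1*(x2*z3-z2*x3) + z1*(x2*y3-y2*x3))
      = s4*(x4*(y1*z3-z1*y3) - y4*(x1*z3-z1*x3) + z4*(x1*y3-y1*x3)) := by
    linear_combination -((y1*z3-z1*y3)*hs1 - (x1*z3-z1*x3)*hs2 + (x1*y3-y1*x3)*hs3)
  have d3 : s3*(x1*(y2*z3-z2*y3) - y1*(x2*z3-z2*x3) + z1*(x2*y3-y2*x3))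
      = s4*(-(x4*(y1*z2-z1*y2) - y4*(x1*z2-z1*x2) + z4*(x1*y2-y1*x2))) := by
    linear_combination (y1*z2-z1*y2)*hs1 - (x1*z2-z1*x2)*hs2 + (x1*y2-y1*x2)*hs3
  set D := x1*(y2*z3-z2*y3) - y1*(x2*z3-z2*x3) + z1*(x2*y3-y2*x3) with hDdef
  set K1 := -(x4*(y2*z3-z2*y3) - y4*(x2*z3-z2*x3) + z4*(x2*y3-y2*x3)) with hK1
  set K2 := x4*(y1*z3-z1*y3) - y4*(x1*z3-z1*x3) + z4*(x1*y3-y1*x3) with hK2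
  set K3 := -(x4*(y1*z2-z1*y2) - y4*(x1*z2-z1*x2) + z4*(x1*y2-y1*x2)) with hK3
  have hD2 : D^2 ≠ 0 := pow_ne_zero 2 hD
  have cancel2 : ∀ u : ℝ, u * D^2 = 0 → u = 0 := by
    intro u hu
    rcases mul_eq_zero.mp hu with h | h
    · exact h
    · exact absurd h hD2
  have cancel1 : ∀ u : ℝ, u * D = 0 → u = 0 := by
    intro u hu
    rcases mul_eq_zero.mp hu with h | h
    · exact h
    · exact absurd h hD
  refine ⟨?_, ?_, ?_, ?_, ?_, ?_⟩
  · have := cancel2 (t1*s2 - t2*s1) (by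
      linear_combination (s2*D)*c1 + (t4*K1)*d2 - (t2*D)*d1 - (s4*K1)*c2)
    linarith
  · have := cancel2 (t1*s3 - t3*s1) (by
      linear_combination (s3*D)*c1 + (t4*K1)*d3 - (t3*D)*d1 - (s4*K1)*c3)
    linarith
  · have := cancel1 (t1*s4 - t4*s1) (by
      linear_combination s4*c1 - t4*d1)
    linarith
  · have := cancel2 (t2*s3 - t3*s2) (by
      linear_combination (s3*D)*c2 + (t4*K2)*d3 - (t3*D)*d2 - (s4*K2)*c3)
    linarith
  · have := cancel1 (t2*s4 - t4*s2) (by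
      linear_combination s4*c2 - t4*d2)
    linarith
  · have := cancel1 (t3*s4 - t4*s3) (by
      linear_combination s4*c3 - t4*d3)
    linarith


lemma conic_pair_c (ci cj A1 B1 D1 A2 B2 D2 : ℝ)
    (h1 : ci*(A1*B1)*(cj*(3*A2^2+D2^2)) = cj*(A2*B2)*(ci*(3*A1^2+D1^2)))
    (h2 : ci*(A1^2-B1^2)*(cj*(3*A2^2+D2^2)) = cj*(A2^2-B2^2)*(ci*(3*A1^2+D1^2))) :
    ci*cj*(A1*B2 - A2*B1) = 0 := by
  by_cases hc : ci*cj = 0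
  · rw [hc]; ring
  · have e1 : A1*B1*(3*A2^2+D2^2) = A2*B2*(3*A1^2+D1^2) := by
      apply mul_left_cancel₀ hc
      linear_combination h1
    have e2 : (A1^2-B1^2)*(3*A2^2+D2^2) = (A2^2-B2^2)*(3*A1^2+D1^2) := by
      apply mul_left_cancel₀ hc
      linear_combination h2
    have := conic_pair A1 B1 D1 A2 B2 D2 e1 e2
    linear_combination (ci*cj)*this

lemma final_contra (c1 a1 b1 d1 c2 a2 b2 d2 c3 a3 b3 d3 c4 a4 b4 d4 : ℝ)
    (h12 : c1*c2*(a1*b2 - a2*b1) = 0) (h13 : c1*c3*(a1*b3 - a3*b1) = 0)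
    (h14 : c1*c4*(a1*b4 - a4*b1) = 0) (h23 : c2*c3*(a2*b3 - a3*b2) = 0)
    (h24 : c2*c4*(a2*b4 - a4*b2) = 0) (h34 : c3*c4*(a3*b4 - a4*b3) = 0)
    (hA : c1*a1^2*d1 + c2*a2^2*d2 + c3*a3^2*d3 + c4*a4^2*d4 = 1/3)
    (hB : c1*b1^2*d1 + c2*b2^2*d2 + c3*b3^2*d3 + c4*b4^2*d4 = 1/3)
    (hC : c1*a1*b1*d1 + c2*a2*b2*d2 + c3*a3*b3*d3 + c4*a4*b4*d4 = 0) : False := by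
  have key : (c1*a1^2*d1 + c2*a2^2*d2 + c3*a3^2*d3 + c4*a4^2*d4) *
      (c1*b1^2*d1 + c2*b2^2*d2 + c3*b3^2*d3 + c4*b4^2*d4) =
      (c1*a1*b1*d1 + c2*a2*b2*d2 + c3*a3*b3*d3 + c4*a4*b4*d4)^2 := by
    linear_combination (d1*d2*(a1*b2 - a2*b1))*h12 + (d1*d3*(a1*b3 - a3*b1))*h13 +
      (d1*d4*(a1*b4 - a4*b1))*h14 + (d2*d3*(a2*b3 - a3*b2))*h23 +
      (d2*d4*(a2*b4 - a4*b2))*h24 + (d3*d4*(a3*b4 - a4*b3))*h34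
  rw [hA, hB, hC] at key
  norm_num at key


theorem real_rank_five_conic_external_line :
    HasTernaryCubeDecomp (fun x y z => (x ^ 2 + y ^ 2 - z ^ 2) * z) 5 ∧
    ¬ HasTernaryCubeDecomp (fun x y z => (x ^ 2 + y ^ 2 - z ^ 2) * z) 4 := by
  constructor
  · refine ⟨![1/6, -1/6, 1/6, -1/6, -5/3], ![1,1,0,0,0], ![0,0,1,1,0], ![1,-1,1,-1,1], ?_⟩
    intro x y z
    simp [Fin.sum_univ_five]
    ring
  · rintro ⟨c, a, b, d, h⟩
    have h' : ∀ x y z : ℝ, (x^2+y^2-z^2)*z =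
        c 0 * (a 0*x + b 0*y + d 0*z)^3 + c 1 * (a 1*x + b 1*y + d 1*z)^3 +
        c 2 * (a 2*x + b 2*y + d 2*z)^3 + c 3 * (a 3*x + b 3*y + d 3*z)^3 := by
      intro x y z
      have := h x y z
      simpa [Fin.sum_univ_four] using this
    have S1 : c 0*(a 0)^3 + c 1*(a 1)^3 + c 2*(a 2)^3 + c 3*(a 3)^3 = 0 := by
      linear_combination -(h' 1 0 0)
    have S2 : c 0*(b 0)^3 + c 1*(b 1)^3 + c 2*(b 2)^3 + c 3*(b 3)^3 = 0 := by
      linear_combination -(h' 0 1 0)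
    have S3 : c 0*(d 0)^3 + c 1*(d 1)^3 + c 2*(d 2)^3 + c 3*(d 3)^3 = -1 := by
      linear_combination -(h' 0 0 1)
    have S4 : c 0*(a 0)^2*(b 0) + c 1*(a 1)^2*(b 1) + c 2*(a 2)^2*(b 2) + c 3*(a 3)^2*(b 3) = 0 := by
      linear_combination (-1/6)*(h' 1 1 0) + (1/6)*(h' 1 (-1) 0) + (1/3)*(h' 0 1 0)
    have S5 : c 0*(a 0)*(b 0)^2 + c 1*(a 1)*(b 1)^2 + c 2*(a 2)*(b 2)^2 + c 3*(a 3)*(b 3)^2 = 0 := by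
      linear_combination (-1/6)*(h' 1 1 0) - (1/6)*(h' 1 (-1) 0) + (1/3)*(h' 1 0 0)
    have S6 : c 0*(a 0)^2*(d 0) + c 1*(a 1)^2*(d 1) + c 2*(a 2)^2*(d 2) + c 3*(a 3)^2*(d 3) = 1/3 := by
      linear_combination (-1/6)*(h' 1 0 1) + (1/6)*(h' 1 0 (-1)) + (1/3)*(h' 0 0 1)
    have S7 : c 0*(a 0)*(d 0)^2 + c 1*(a 1)*(d 1)^2 + c 2*(a 2)*(d 2)^2 + c 3*(a 3)*(d 3)^2 = 0 := by
      linear_combination (-1/6)*(h' 1 0 1) - (1/6)*(h' 1 0 (-1)) + (1/3)*(h' 1 0 0)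
    have S8 : c 0*(b 0)^2*(d 0) + c 1*(b 1)^2*(d 1) + c 2*(b 2)^2*(d 2) + c 3*(b 3)^2*(d 3) = 1/3 := by
      linear_combination (-1/6)*(h' 0 1 1) + (1/6)*(h' 0 1 (-1)) + (1/3)*(h' 0 0 1)
    have S9 : c 0*(b 0)*(d 0)^2 + c 1*(b 1)*(d 1)^2 + c 2*(b 2)*(d 2)^2 + c 3*(b 3)*(d 3)^2 = 0 := by
      linear_combination (-1/6)*(h' 0 1 1) - (1/6)*(h' 0 1 (-1)) + (1/3)*(h' 0 1 0)
    have S10 : c 0*(a 0)*(b 0)*(d 0) + c 1*(a 1)*(b 1)*(d 1) + c 2*(a 2)*(b 2)*(d 2) + c 3*(a 3)*(b 3)*(d 3) = 0 := by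
      linear_combination (-1/24)*(h' 1 1 1) + (1/24)*(h' 1 1 (-1)) + (1/24)*(h' 1 (-1) 1) - (1/24)*(h' 1 (-1) (-1))
    have RAx : (c 0*(a 0*b 0))*(a 0) + (c 1*(a 1*b 1))*(a 1) + (c 2*(a 2*b 2))*(a 2) + (c 3*(a 3*b 3))*(a 3) = 0 := by
      linear_combination S4
    have RAy : (c 0*(a 0*b 0))*(b 0) + (c 1*(a 1*b 1))*(b 1) + (c 2*(a 2*b 2))*(b 2) + (c 3*(a 3*b 3))*(b 3) = 0 := by
      linear_combination S5
    have RAz : (c 0*(a 0*b 0))*(d 0) + (c 1*(a 1*b 1))*(d 1) + (c 2*(a 2*b 2))*(d 2) + (c 3*(a 3*b 3))*(d 3) = 0 := by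
      linear_combination S10
    have RBx : (c 0*((a 0)^2-(b 0)^2))*(a 0) + (c 1*((a 1)^2-(b 1)^2))*(a 1) + (c 2*((a 2)^2-(b 2)^2))*(a 2) + (c 3*((a 3)^2-(b 3)^2))*(a 3) = 0 := by
      linear_combination S1 - S5
    have RBy : (c 0*((a 0)^2-(b 0)^2))*(b 0) + (c 1*((a 1)^2-(b 1)^2))*(b 1) + (c 2*((a 2)^2-(b 2)^2))*(b 2) + (c 3*((a 3)^2-(b 3)^2))*(b 3) = 0 := by
      linear_combination S4 - S2
    have RBz : (c 0*((a 0)^2-(b 0)^2))*(d 0) + (c 1*((a 1)^2-(b 1)^2))*(d 1) + (c 2*((a 2)^2-(b 2)^2))*(d 2) + (c 3*((a 3)^2-(b 3)^2))*(d 3) = 0 := by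
      linear_combination S6 - S8
    have RGx : (c 0*(3*(a 0)^2+(d 0)^2))*(a 0) + (c 1*(3*(a 1)^2+(d 1)^2))*(a 1) + (c 2*(3*(a 2)^2+(d 2)^2))*(a 2) + (c 3*(3*(a 3)^2+(d 3)^2))*(a 3) = 0 := by
      linear_combination 3*S1 + S7
    have RGy : (c 0*(3*(a 0)^2+(d 0)^2))*(b 0) + (c 1*(3*(a 1)^2+(d 1)^2))*(b 1) + (c 2*(3*(a 2)^2+(d 2)^2))*(b 2) + (c 3*(3*(a 3)^2+(d 3)^2))*(b 3) = 0 := by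
      linear_combination 3*S4 + S9
    have RGz : (c 0*(3*(a 0)^2+(d 0)^2))*(d 0) + (c 1*(3*(a 1)^2+(d 1)^2))*(d 1) + (c 2*(3*(a 2)^2+(d 2)^2))*(d 2) + (c 3*(3*(a 3)^2+(d 3)^2))*(d 3) = 0 := by
      linear_combination 3*S6 + S3
    by_cases hd1 : a 0*(b 1*d 2 - d 1*b 2) - b 0*(a 1*d 2 - d 1*a 2) + d 0*(a 1*b 2 - b 1*a 2) = 0
    case neg =>
      obtain ⟨q12,q13,q14,q23,q24,q34⟩ := ker4 (a 0) (b 0) (d 0) (a 1) (b 1) (d 1) (a 2) (b 2) (d 2) (a 3) (b 3) (d 3) (c 0*(a 0*b 0)) (c 1*(a 1*b 1)) (c 2*(a 2*b 2)) (c 3*(a 3*b 3)) (c 0*(3*(a 0)^2+(d 0)^2)) (c 1*(3*(a 1)^2+(d 1)^2)) (c 2*(3*(a 2)^2+(d 2)^2)) (c 3*(3*(a 3)^2+(d 3)^2)) hd1 (by linear_combination RAx) (by linear_combination RAy) (by linear_combination RAz) (by linear_combination RGx) (by linear_combination RGy) (by linear_combination RGz)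
      obtain ⟨r12,r13,r14,r23,r24,r34⟩ := ker4 (a 0) (b 0) (d 0) (a 1) (b 1) (d 1) (a 2) (b 2) (d 2) (a 3) (b 3) (d 3) (c 0*((a 0)^2-(b 0)^2)) (c 1*((a 1)^2-(b 1)^2)) (c 2*((a 2)^2-(b 2)^2)) (c 3*((a 3)^2-(b 3)^2)) (c 0*(3*(a 0)^2+(d 0)^2)) (c 1*(3*(a 1)^2+(d 1)^2)) (c 2*(3*(a 2)^2+(d 2)^2)) (c 3*(3*(a 3)^2+(d 3)^2)) hd1 (by linear_combination RBx) (by linear_combination RBy) (by linear_combination RBz) (by linear_combination RGx) (by linear_combination RGy) (by linear_combination RGz)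
      have hP01 : c 0*c 1*(a 0*b 1 - a 1*b 0) = 0 := by
        have hcp := conic_pair_c (c 0) (c 1) (a 0) (b 0) (d 0) (a 1) (b 1) (d 1) (by linear_combination q12) (by linear_combination r12)
        linear_combination hcp
      have hP02 : c 0*c 2*(a 0*b 2 - a 2*b 0) = 0 := by
        have hcp := conic_pair_c (c 0) (c 2) (a 0) (b 0) (d 0) (a 2) (b 2) (d 2) (by linear_combination q13) (by linear_combination r13)
        linear_combination hcp
      have hP03 : c 0*c 3*(a 0*b 3 - a 3*b 0) = 0 := by
        have hcp := conic_pair_c (c 0) (c 3) (a 0) (b 0) (d 0) (a 3) (b 3) (d 3) (by linear_combination q14) (by linear_combination r14)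
        linear_combination hcp
      have hP12 : c 1*c 2*(a 1*b 2 - a 2*b 1) = 0 := by
        have hcp := conic_pair_c (c 1) (c 2) (a 1) (b 1) (d 1) (a 2) (b 2) (d 2) (by linear_combination q23) (by linear_combination r23)
        linear_combination hcp
      have hP13 : c 1*c 3*(a 1*b 3 - a 3*b 1) = 0 := by
        have hcp := conic_pair_c (c 1) (c 3) (a 1) (b 1) (d 1) (a 3) (b 3) (d 3) (by linear_combination q24) (by linear_combination r24)
        linear_combination hcp
      have hP23 : c 2*c 3*(a 2*b 3 - a 3*b 2) = 0 := by
        have hcp := conic_pair_c (c 2) (c 3) (a 2) (b 2) (d 2) (a 3) (b 3) (d 3) (by linear_combination q34) (by linear_combination r34)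
        linear_combination hcp
      exact final_contra (c 0) (a 0) (b 0) (d 0) (c 1) (a 1) (b 1) (d 1) (c 2) (a 2) (b 2) (d 2) (c 3) (a 3) (b 3) (d 3) hP01 hP02 hP03 hP12 hP13 hP23 (by linear_combination S6) (by linear_combination S8) (by linear_combination S10)
    case pos =>
      by_cases hd2 : a 0*(b 1*d 3 - d 1*b 3) - b 0*(a 1*d 3 - d 1*a 3) + d 0*(a 1*b 3 - b 1*a 3) = 0
      case neg =>
        obtain ⟨q12,q13,q14,q23,q24,q34⟩ := ker4 (a 0) (b 0) (d 0) (a 1) (b 1) (d 1) (a 3) (b 3) (d 3) (a 2) (b 2) (d 2) (c 0*(a 0*b 0)) (c 1*(a 1*b 1)) (c 3*(a 3*b 3)) (c 2*(a 2*b 2)) (c 0*(3*(a 0)^2+(d 0)^2)) (c 1*(3*(a 1)^2+(d 1)^2)) (c 3*(3*(a 3)^2+(d 3)^2)) (c 2*(3*(a 2)^2+(d 2)^2)) hd2 (by linear_combination RAx) (by linear_combination RAy) (by linear_combination RAz) (by linear_combination RGx) (by linear_combination RGy) (by linear_combination RGz)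
        obtain ⟨r12,r13,r14,r23,r24,r34⟩ := ker4 (a 0) (b 0) (d 0) (a 1) (b 1) (d 1) (a 3) (b 3) (d 3) (a 2) (b 2) (d 2) (c 0*((a 0)^2-(b 0)^2)) (c 1*((a 1)^2-(b 1)^2)) (c 3*((a 3)^2-(b 3)^2)) (c 2*((a 2)^2-(b 2)^2)) (c 0*(3*(a 0)^2+(d 0)^2)) (c 1*(3*(a 1)^2+(d 1)^2)) (c 3*(3*(a 3)^2+(d 3)^2)) (c 2*(3*(a 2)^2+(d 2)^2)) hd2 (by linear_combination RBx) (by linear_combination RBy) (by linear_combination RBz) (by linear_combination RGx) (by linear_combination RGy) (by linear_combination RGz)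
        have hP01 : c 0*c 1*(a 0*b 1 - a 1*b 0) = 0 := by
          have hcp := conic_pair_c (c 0) (c 1) (a 0) (b 0) (d 0) (a 1) (b 1) (d 1) (by linear_combination q12) (by linear_combination r12)
          linear_combination hcp
        have hP03 : c 0*c 3*(a 0*b 3 - a 3*b 0) = 0 := by
          have hcp := conic_pair_c (c 0) (c 3) (a 0) (b 0) (d 0) (a 3) (b 3) (d 3) (by linear_combination q13) (by linear_combination r13)
          linear_combination hcp
        have hP02 : c 0*c 2*(a 0*b 2 - a 2*b 0) = 0 := by
          have hcp := conic_pair_c (c 0) (c 2) (a 0) (b 0) (d 0) (a 2) (b 2) (d 2) (by linear_combination q14) (by linear_combination r14)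
          linear_combination hcp
        have hP13 : c 1*c 3*(a 1*b 3 - a 3*b 1) = 0 := by
          have hcp := conic_pair_c (c 1) (c 3) (a 1) (b 1) (d 1) (a 3) (b 3) (d 3) (by linear_combination q23) (by linear_combination r23)
          linear_combination hcp
        have hP12 : c 1*c 2*(a 1*b 2 - a 2*b 1) = 0 := by
          have hcp := conic_pair_c (c 1) (c 2) (a 1) (b 1) (d 1) (a 2) (b 2) (d 2) (by linear_combination q24) (by linear_combination r24)
          linear_combination hcp
        have hP23 : c 2*c 3*(a 2*b 3 - a 3*b 2) = 0 := by
          have hcp := conic_pair_c (c 3) (c 2) (a 3) (b 3) (d 3) (a 2) (b 2) (d 2) (by linear_combination q34) (by linear_combination r34)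
          linear_combination -hcp
        exact final_contra (c 0) (a 0) (b 0) (d 0) (c 1) (a 1) (b 1) (d 1) (c 2) (a 2) (b 2) (d 2) (c 3) (a 3) (b 3) (d 3) hP01 hP02 hP03 hP12 hP13 hP23 (by linear_combination S6) (by linear_combination S8) (by linear_combination S10)
      case pos =>
        by_cases hd3 : a 0*(b 2*d 3 - d 2*b 3) - b 0*(a 2*d 3 - d 2*a 3) + d 0*(a 2*b 3 - b 2*a 3) = 0
        case neg =>
          obtain ⟨q12,q13,q14,q23,q24,q34⟩ := ker4 (a 0) (b 0) (d 0) (a 2) (b 2) (d 2) (a 3) (b 3) (d 3) (a 1) (b 1) (d 1) (c 0*(a 0*b 0)) (c 2*(a 2*b 2)) (c 3*(a 3*b 3)) (c 1*(a 1*b 1)) (c 0*(3*(a 0)^2+(d 0)^2)) (c 2*(3*(a 2)^2+(d 2)^2)) (c 3*(3*(a 3)^2+(d 3)^2)) (c 1*(3*(a 1)^2+(d 1)^2)) hd3 (by linear_combination RAx) (by linear_combination RAy) (by linear_combination RAz) (by linear_combination RGx) (by linear_combination RGy) (by linear_combination RGz)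
          obtain ⟨r12,r13,r14,r23,r24,r34⟩ := ker4 (a 0) (b 0) (d 0) (a 2) (b 2) (d 2) (a 3) (b 3) (d 3) (a 1) (b 1) (d 1) (c 0*((a 0)^2-(b 0)^2)) (c 2*((a 2)^2-(b 2)^2)) (c 3*((a 3)^2-(b 3)^2)) (c 1*((a 1)^2-(b 1)^2)) (c 0*(3*(a 0)^2+(d 0)^2)) (c 2*(3*(a 2)^2+(d 2)^2)) (c 3*(3*(a 3)^2+(d 3)^2)) (c 1*(3*(a 1)^2+(d 1)^2)) hd3 (by linear_combination RBx) (by linear_combination RBy) (by linear_combination RBz) (by linear_combination RGx) (by linear_combination RGy) (by linear_combination RGz)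
          have hP02 : c 0*c 2*(a 0*b 2 - a 2*b 0) = 0 := by
            have hcp := conic_pair_c (c 0) (c 2) (a 0) (b 0) (d 0) (a 2) (b 2) (d 2) (by linear_combination q12) (by linear_combination r12)
            linear_combination hcp
          have hP03 : c 0*c 3*(a 0*b 3 - a 3*b 0) = 0 := by
            have hcp := conic_pair_c (c 0) (c 3) (a 0) (b 0) (d 0) (a 3) (b 3) (d 3) (by linear_combination q13) (by linear_combination r13)
            linear_combination hcp
          have hP01 : c 0*c 1*(a 0*b 1 - a 1*b 0) = 0 := by
            have hcp := conic_pair_c (c 0) (c 1) (a 0) (b 0) (d 0) (a 1) (b 1) (d 1) (by linear_combination q14) (by linear_combination r14)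
            linear_combination hcp
          have hP23 : c 2*c 3*(a 2*b 3 - a 3*b 2) = 0 := by
            have hcp := conic_pair_c (c 2) (c 3) (a 2) (b 2) (d 2) (a 3) (b 3) (d 3) (by linear_combination q23) (by linear_combination r23)
            linear_combination hcp
          have hP12 : c 1*c 2*(a 1*b 2 - a 2*b 1) = 0 := by
            have hcp := conic_pair_c (c 2) (c 1) (a 2) (b 2) (d 2) (a 1) (b 1) (d 1) (by linear_combination q24) (by linear_combination r24)
            linear_combination -hcp
          have hP13 : c 1*c 3*(a 1*b 3 - a 3*b 1) = 0 := by
            have hcp := conic_pair_c (c 3) (c 1) (a 3) (b 3) (d 3) (a 1) (b 1) (d 1) (by linear_combination q34) (by linear_combination r34)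
            linear_combination -hcp
          exact final_contra (c 0) (a 0) (b 0) (d 0) (c 1) (a 1) (b 1) (d 1) (c 2) (a 2) (b 2) (d 2) (c 3) (a 3) (b 3) (d 3) hP01 hP02 hP03 hP12 hP13 hP23 (by linear_combination S6) (by linear_combination S8) (by linear_combination S10)
        case pos =>
          by_cases hd4 : a 1*(b 2*d 3 - d 2*b 3) - b 1*(a 2*d 3 - d 2*a 3) + d 1*(a 2*b 3 - b 2*a 3) = 0
          case neg =>
            obtain ⟨q12,q13,q14,q23,q24,q34⟩ := ker4 (a 1) (b 1) (d 1) (a 2) (b 2) (d 2) (a 3) (b 3) (d 3) (a 0) (b 0) (d 0) (c 1*(a 1*b 1)) (c 2*(a 2*b 2)) (c 3*(a 3*b 3)) (c 0*(a 0*b 0)) (c 1*(3*(a 1)^2+(d 1)^2)) (c 2*(3*(a 2)^2+(d 2)^2)) (c 3*(3*(a 3)^2+(d 3)^2)) (c 0*(3*(a 0)^2+(d 0)^2)) hd4 (by linear_combination RAx) (by linear_combination RAy) (by linear_combination RAz) (by linear_combination RGx) (by linear_combination RGy) (by linear_combination RGz)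
            obtain ⟨r12,r13,r14,r23,r24,r34⟩ := ker4 (a 1) (b 1) (d 1) (a 2) (b 2) (d 2) (a 3) (b 3) (d 3) (a 0) (b 0) (d 0) (c 1*((a 1)^2-(b 1)^2)) (c 2*((a 2)^2-(b 2)^2)) (c 3*((a 3)^2-(b 3)^2)) (c 0*((a 0)^2-(b 0)^2)) (c 1*(3*(a 1)^2+(d 1)^2)) (c 2*(3*(a 2)^2+(d 2)^2)) (c 3*(3*(a 3)^2+(d 3)^2)) (c 0*(3*(a 0)^2+(d 0)^2)) hd4 (by linear_combination RBx) (by linear_combination RBy) (by linear_combination RBz) (by linear_combination RGx) (by linear_combination RGy) (by linear_combination RGz)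
            have hP12 : c 1*c 2*(a 1*b 2 - a 2*b 1) = 0 := by
              have hcp := conic_pair_c (c 1) (c 2) (a 1) (b 1) (d 1) (a 2) (b 2) (d 2) (by linear_combination q12) (by linear_combination r12)
              linear_combination hcp
            have hP13 : c 1*c 3*(a 1*b 3 - a 3*b 1) = 0 := by
              have hcp := conic_pair_c (c 1) (c 3) (a 1) (b 1) (d 1) (a 3) (b 3) (d 3) (by linear_combination q13) (by linear_combination r13)
              linear_combination hcp
            have hP01 : c 0*c 1*(a 0*b 1 - a 1*b 0) = 0 := by
              have hcp := conic_pair_c (c 1) (c 0) (a 1) (b 1) (d 1) (a 0) (b 0) (d 0) (by linear_combination q14) (by linear_combination r14)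
              linear_combination -hcp
            have hP23 : c 2*c 3*(a 2*b 3 - a 3*b 2) = 0 := by
              have hcp := conic_pair_c (c 2) (c 3) (a 2) (b 2) (d 2) (a 3) (b 3) (d 3) (by linear_combination q23) (by linear_combination r23)
              linear_combination hcp
            have hP02 : c 0*c 2*(a 0*b 2 - a 2*b 0) = 0 := by
              have hcp := conic_pair_c (c 2) (c 0) (a 2) (b 2) (d 2) (a 0) (b 0) (d 0) (by linear_combination q24) (by linear_combination r24)
              linear_combination -hcp
            have hP03 : c 0*c 3*(a 0*b 3 - a 3*b 0) = 0 := by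
              have hcp := conic_pair_c (c 3) (c 0) (a 3) (b 3) (d 3) (a 0) (b 0) (d 0) (by linear_combination q34) (by linear_combination r34)
              linear_combination -hcp
            exact final_contra (c 0) (a 0) (b 0) (d 0) (c 1) (a 1) (b 1) (d 1) (c 2) (a 2) (b 2) (d 2) (c 3) (a 3) (b 3) (d 3) hP01 hP02 hP03 hP12 hP13 hP23 (by linear_combination S6) (by linear_combination S8) (by linear_combination S10)
          case pos =>
            by_cases hz01 : a 0*b 1 - a 1*b 0 = 0
            case neg =>
              have he0 : a 0*(b 0*d 1 - d 0*b 1) + b 0*(d 0*a 1 - a 0*d 1) + d 0*(a 0*b 1 - b 0*a 1) = 0 := by ring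
              have he1 : a 1*(b 0*d 1 - d 0*b 1) + b 1*(d 0*a 1 - a 0*d 1) + d 1*(a 0*b 1 - b 0*a 1) = 0 := by ring
              have he2 : a 2*(b 0*d 1 - d 0*b 1) + b 2*(d 0*a 1 - a 0*d 1) + d 2*(a 0*b 1 - b 0*a 1) = 0 := by linear_combination hd1
              have he3 : a 3*(b 0*d 1 - d 0*b 1) + b 3*(d 0*a 1 - a 0*d 1) + d 3*(a 0*b 1 - b 0*a 1) = 0 := by linear_combination hd2
              exact hz01 (by linear_combination (1/2)*(h' (1+(b 0*d 1 - d 0*b 1)) (d 0*a 1 - a 0*d 1) (a 0*b 1 - b 0*a 1)) + (1/2)*(h' (-1+(b 0*d 1 - d 0*b 1)) (d 0*a 1 - a 0*d 1) (a 0*b 1 - b 0*a 1)) - h' (b 0*d 1 - d 0*b 1) (d 0*a 1 - a 0*d 1) (a 0*b 1 - b 0*a 1) - (1/2)*(h' 1 0 0) - (1/2)*(h' (-1) 0 0) + h' 0 0 0 + 3*(c 0)*(a 0)^2*he0 + 3*(c 1)*(a 1)^2*he1 + 3*(c 2)*(a 2)^2*he2 + 3*(c 3)*(a 3)^2*he3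)
            case pos =>
              by_cases hz02 : a 0*b 2 - a 2*b 0 = 0
              case neg =>
                have he0 : a 0*(b 0*d 2 - d 0*b 2) + b 0*(d 0*a 2 - a 0*d 2) + d 0*(a 0*b 2 - b 0*a 2) = 0 := by ring
                have he1 : a 1*(b 0*d 2 - d 0*b 2) + b 1*(d 0*a 2 - a 0*d 2) + d 1*(a 0*b 2 - b 0*a 2) = 0 := by linear_combination -hd1
                have he2 : a 2*(b 0*d 2 - d 0*b 2) + b 2*(d 0*a 2 - a 0*d 2) + d 2*(a 0*b 2 - b 0*a 2) = 0 := by ring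
                have he3 : a 3*(b 0*d 2 - d 0*b 2) + b 3*(d 0*a 2 - a 0*d 2) + d 3*(a 0*b 2 - b 0*a 2) = 0 := by linear_combination hd3
                exact hz02 (by linear_combination (1/2)*(h' (1+(b 0*d 2 - d 0*b 2)) (d 0*a 2 - a 0*d 2) (a 0*b 2 - b 0*a 2)) + (1/2)*(h' (-1+(b 0*d 2 - d 0*b 2)) (d 0*a 2 - a 0*d 2) (a 0*b 2 - b 0*a 2)) - h' (b 0*d 2 - d 0*b 2) (d 0*a 2 - a 0*d 2) (a 0*b 2 - b 0*a 2) - (1/2)*(h' 1 0 0) - (1/2)*(h' (-1) 0 0) + h' 0 0 0 + 3*(c 0)*(a 0)^2*he0 + 3*(c 1)*(a 1)^2*he1 + 3*(c 2)*(a 2)^2*he2 + 3*(c 3)*(a 3)^2*he3)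
              case pos =>
                by_cases hz03 : a 0*b 3 - a 3*b 0 = 0
                case neg =>
                  have he0 : a 0*(b 0*d 3 - d 0*b 3) + b 0*(d 0*a 3 - a 0*d 3) + d 0*(a 0*b 3 - b 0*a 3) = 0 := by ring
                  have he1 : a 1*(b 0*d 3 - d 0*b 3) + b 1*(d 0*a 3 - a 0*d 3) + d 1*(a 0*b 3 - b 0*a 3) = 0 := by linear_combination -hd2
                  have he2 : a 2*(b 0*d 3 - d 0*b 3) + b 2*(d 0*a 3 - a 0*d 3) + d 2*(a 0*b 3 - b 0*a 3) = 0 := by linear_combination -hd3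
                  have he3 : a 3*(b 0*d 3 - d 0*b 3) + b 3*(d 0*a 3 - a 0*d 3) + d 3*(a 0*b 3 - b 0*a 3) = 0 := by ring
                  exact hz03 (by linear_combination (1/2)*(h' (1+(b 0*d 3 - d 0*b 3)) (d 0*a 3 - a 0*d 3) (a 0*b 3 - b 0*a 3)) + (1/2)*(h' (-1+(b 0*d 3 - d 0*b 3)) (d 0*a 3 - a 0*d 3) (a 0*b 3 - b 0*a 3)) - h' (b 0*d 3 - d 0*b 3) (d 0*a 3 - a 0*d 3) (a 0*b 3 - b 0*a 3) - (1/2)*(h' 1 0 0) - (1/2)*(h' (-1) 0 0) + h' 0 0 0 + 3*(c 0)*(a 0)^2*he0 + 3*(c 1)*(a 1)^2*he1 + 3*(c 2)*(a 2)^2*he2 + 3*(c 3)*(a 3)^2*he3)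
                case pos =>
                  by_cases hz12 : a 1*b 2 - a 2*b 1 = 0
                  case neg =>
                    have he0 : a 0*(b 1*d 2 - d 1*b 2) + b 0*(d 1*a 2 - a 1*d 2) + d 0*(a 1*b 2 - b 1*a 2) = 0 := by linear_combination hd1
                    have he1 : a 1*(b 1*d 2 - d 1*b 2) + b 1*(d 1*a 2 - a 1*d 2) + d 1*(a 1*b 2 - b 1*a 2) = 0 := by ring
                    have he2 : a 2*(b 1*d 2 - d 1*b 2) + b 2*(d 1*a 2 - a 1*d 2) + d 2*(a 1*b 2 - b 1*a 2) = 0 := by ring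
                    have he3 : a 3*(b 1*d 2 - d 1*b 2) + b 3*(d 1*a 2 - a 1*d 2) + d 3*(a 1*b 2 - b 1*a 2) = 0 := by linear_combination hd4
                    exact hz12 (by linear_combination (1/2)*(h' (1+(b 1*d 2 - d 1*b 2)) (d 1*a 2 - a 1*d 2) (a 1*b 2 - b 1*a 2)) + (1/2)*(h' (-1+(b 1*d 2 - d 1*b 2)) (d 1*a 2 - a 1*d 2) (a 1*b 2 - b 1*a 2)) - h' (b 1*d 2 - d 1*b 2) (d 1*a 2 - a 1*d 2) (a 1*b 2 - b 1*a 2) - (1/2)*(h' 1 0 0) - (1/2)*(h' (-1) 0 0) + h' 0 0 0 + 3*(c 0)*(a 0)^2*he0 + 3*(c 1)*(a 1)^2*he1 + 3*(c 2)*(a 2)^2*he2 + 3*(c 3)*(a 3)^2*he3)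
                  case pos =>
                    by_cases hz13 : a 1*b 3 - a 3*b 1 = 0
                    case neg =>
                      have he0 : a 0*(b 1*d 3 - d 1*b 3) + b 0*(d 1*a 3 - a 1*d 3) + d 0*(a 1*b 3 - b 1*a 3) = 0 := by linear_combination hd2
                      have he1 : a 1*(b 1*d 3 - d 1*b 3) + b 1*(d 1*a 3 - a 1*d 3) + d 1*(a 1*b 3 - b 1*a 3) = 0 := by ring
                      have he2 : a 2*(b 1*d 3 - d 1*b 3) + b 2*(d 1*a 3 - a 1*d 3) + d 2*(a 1*b 3 - b 1*a 3) = 0 := by linear_combination -hd4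
                      have he3 : a 3*(b 1*d 3 - d 1*b 3) + b 3*(d 1*a 3 - a 1*d 3) + d 3*(a 1*b 3 - b 1*a 3) = 0 := by ring
                      exact hz13 (by linear_combination (1/2)*(h' (1+(b 1*d 3 - d 1*b 3)) (d 1*a 3 - a 1*d 3) (a 1*b 3 - b 1*a 3)) + (1/2)*(h' (-1+(b 1*d 3 - d 1*b 3)) (d 1*a 3 - a 1*d 3) (a 1*b 3 - b 1*a 3)) - h' (b 1*d 3 - d 1*b 3) (d 1*a 3 - a 1*d 3) (a 1*b 3 - b 1*a 3) - (1/2)*(h' 1 0 0) - (1/2)*(h' (-1) 0 0) + h' 0 0 0 + 3*(c 0)*(a 0)^2*he0 + 3*(c 1)*(a 1)^2*he1 + 3*(c 2)*(a 2)^2*he2 + 3*(c 3)*(a 3)^2*he3)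
                    case pos =>
                      by_cases hz23 : a 2*b 3 - a 3*b 2 = 0
                      case neg =>
                        have he0 : a 0*(b 2*d 3 - d 2*b 3) + b 0*(d 2*a 3 - a 2*d 3) + d 0*(a 2*b 3 - b 2*a 3) = 0 := by linear_combination hd3
                        have he1 : a 1*(b 2*d 3 - d 2*b 3) + b 1*(d 2*a 3 - a 2*d 3) + d 1*(a 2*b 3 - b 2*a 3) = 0 := by linear_combination hd4
                        have he2 : a 2*(b 2*d 3 - d 2*b 3) + b 2*(d 2*a 3 - a 2*d 3) + d 2*(a 2*b 3 - b 2*a 3) = 0 := by ring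
                        have he3 : a 3*(b 2*d 3 - d 2*b 3) + b 3*(d 2*a 3 - a 2*d 3) + d 3*(a 2*b 3 - b 2*a 3) = 0 := by ring
                        exact hz23 (by linear_combination (1/2)*(h' (1+(b 2*d 3 - d 2*b 3)) (d 2*a 3 - a 2*d 3) (a 2*b 3 - b 2*a 3)) + (1/2)*(h' (-1+(b 2*d 3 - d 2*b 3)) (d 2*a 3 - a 2*d 3) (a 2*b 3 - b 2*a 3)) - h' (b 2*d 3 - d 2*b 3) (d 2*a 3 - a 2*d 3) (a 2*b 3 - b 2*a 3) - (1/2)*(h' 1 0 0) - (1/2)*(h' (-1) 0 0) + h' 0 0 0 + 3*(c 0)*(a 0)^2*he0 + 3*(c 1)*(a 1)^2*he1 + 3*(c 2)*(a 2)^2*he2 + 3*(c 3)*(a 3)^2*he3)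
                      case pos =>
                        have hP01 : c 0*c 1*(a 0*b 1 - a 1*b 0) = 0 := by linear_combination (c 0*c 1)*hz01
                        have hP02 : c 0*c 2*(a 0*b 2 - a 2*b 0) = 0 := by linear_combination (c 0*c 2)*hz02
                        have hP03 : c 0*c 3*(a 0*b 3 - a 3*b 0) = 0 := by linear_combination (c 0*c 3)*hz03
                        have hP12 : c 1*c 2*(a 1*b 2 - a 2*b 1) = 0 := by linear_combination (c 1*c 2)*hz12
                        have hP13 : c 1*c 3*(a 1*b 3 - a 3*b 1) = 0 := by linear_combination (c 1*c 3)*hz13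
                        have hP23 : c 2*c 3*(a 2*b 3 - a 3*b 2) = 0 := by linear_combination (c 2*c 3)*hz23
                        exact final_contra (c 0) (a 0) (b 0) (d 0) (c 1) (a 1) (b 1) (d 1) (c 2) (a 2) (b 2) (d 2) (c 3) (a 3) (b 3) (d 3) hP01 hP02 hP03 hP12 hP13 hP23 (by linear_combination S6) (by linear_combination S8) (by linear_combination S10)
end

section
/- The real Waring rank of F = x³+y³+z³−3xyz is exactly 5. -/
/-- Every real number has a real cube root. -/
lemma exists_cube_root (c : ℝ) : ∃ r : ℝ, r ^ 3 = c := by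
  rcases le_total 0 c with hc | hc
  · refine ⟨c ^ ((3 : ℝ)⁻¹), ?_⟩
    rw [← Real.rpow_natCast (c ^ ((3:ℝ)⁻¹)) 3, ← Real.rpow_mul hc]
    norm_num
  · have hc' : 0 ≤ -c := by linarith
    refine ⟨-((-c) ^ ((3 : ℝ)⁻¹)), ?_⟩
    have h2 : (-((-c) ^ ((3:ℝ)⁻¹))) ^ (3:ℕ) = -(((-c) ^ ((3:ℝ)⁻¹)) ^ (3:ℕ)) := by ring
    rw [h2, ← Real.rpow_natCast ((-c) ^ ((3:ℝ)⁻¹)) 3, ← Real.rpow_mul hc']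
    norm_num

/-- If p(x²-yz)+q(y²-xz)+r(z²-xy) is a combination of two squares of linear
forms, then p³+q³+r³ = 3pqr (a rank-≤2 quadric has vanishing determinant). -/
lemma detLemma (p q r s t a b c e f g : ℝ)
    (h : ∀ x y z : ℝ, p*(x^2 - y*z) + q*(y^2 - x*z) + r*(z^2 - x*y)
        = s*(a*x+b*y+c*z)^2 + t*(e*x+f*y+g*z)^2) :
    p^3 + q^3 + r^3 = 3*(p*q*r) := by
  have H0 : p = s*a^2 + t*e^2 := by linear_combination h 1 0 0
  have H1 : q = s*b^2 + t*f^2 := by linear_combination h 0 1 0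
  have H2 : r = s*c^2 + t*g^2 := by linear_combination h 0 0 1
  have H3 : -p = 2*(s*b*c) + 2*(t*f*g) := by
    linear_combination h 0 1 1 - h 0 1 0 - h 0 0 1
  have H4 : -q = 2*(s*a*c) + 2*(t*e*g) := by
    linear_combination h 1 0 1 - h 1 0 0 - h 0 0 1
  have H5 : -r = 2*(s*a*b) + 2*(t*e*f) := by
    linear_combination h 1 1 0 - h 1 0 0 - h 0 1 0
  linear_combination
    ((-4)*q*r + p^2) * H0 +
    ((-4)*r*t*e^2 + (-4)*r*s*a^2 + q^2) * H1 +
    ((-4)*t^2*e^2*f^2 + (-4)*s*t*b^2*e^2 + (-4)*s*t*a^2*f^2 + (-4)*s^2*a^2*b^2 + r^2) * H2 +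
    (2*t^2*e^2*f*g + 2*s*t*b*c*e^2 + 2*s*t*a^2*f*g + 2*s^2*a^2*b*c + (-1)*q*r + (-1)*p*t*e^2 + (-1)*p*s*a^2) * H3 +
    (2*t^2*e*f^2*g + 2*s*t*b^2*e*g + 2*s*t*a*c*f^2 + 2*s^2*a*b^2*c + 2*r*t*f*g + 2*r*s*b*c + (-1)*q*t*f^2 + (-1)*q*s*b^2) * H4 +
    ((-2)*t^2*e*f*g^2 + 2*s*t*c^2*e*f + (-4)*s*t*b*c*e*g + (-4)*s*t*a*c*f*g + 2*s*t*a*b*g^2 + (-2)*s^2*a*b*c^2 + (-1)*r*t*g^2 + (-1)*r*s*c^2) * H5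

/-- Polarization identity: the directional derivative of F along (P,Q,R). -/
lemma keyId (A0 B0 D0 A1 B1 D1 A2 B2 D2 A3 B3 D3 : ℝ)
    (h : ∀ x y z : ℝ, x^3 + y^3 + z^3 - 3*(x*y*z)
        = (A0*x+B0*y+D0*z)^3 + (A1*x+B1*y+D1*z)^3
          + (A2*x+B2*y+D2*z)^3 + (A3*x+B3*y+D3*z)^3) :
    ∀ P Q R x y z : ℝ,
      P*(x^2 - y*z) + Q*(y^2 - x*z) + R*(z^2 - x*y)
        = (P*A0+Q*B0+R*D0)*(A0*x+B0*y+D0*z)^2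
          + (P*A1+Q*B1+R*D1)*(A1*x+B1*y+D1*z)^2
          + (P*A2+Q*B2+R*D2)*(A2*x+B2*y+D2*z)^2
          + (P*A3+Q*B3+R*D3)*(A3*x+B3*y+D3*z)^2 := by
  intro P Q R x y z
  linear_combination (h (x+P) (y+Q) (z+R))/6 - (h (x-P) (y-Q) (z-R))/6 - (h P Q R)/3

/-- If a direction is apolar to the first two linear forms, then it lies on F = 0. -/
lemma pairF (A0 B0 D0 A1 B1 D1 A2 B2 D2 A3 B3 D3 : ℝ)
    (h : ∀ x y z : ℝ, x^3 + y^3 + z^3 - 3*(x*y*z)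
        = (A0*x+B0*y+D0*z)^3 + (A1*x+B1*y+D1*z)^3
          + (A2*x+B2*y+D2*z)^3 + (A3*x+B3*y+D3*z)^3)
    (P Q R : ℝ) (h0 : P*A0+Q*B0+R*D0 = 0) (h1 : P*A1+Q*B1+R*D1 = 0) :
    P^3 + Q^3 + R^3 = 3*(P*Q*R) := by
  have key := keyId A0 B0 D0 A1 B1 D1 A2 B2 D2 A3 B3 D3 h
  refine detLemma P Q R (P*A2+Q*B2+R*D2) (P*A3+Q*B3+R*D3) A2 B2 D2 A3 B3 D3 ?_
  intro x y z
  linear_combination key P Q R x y z + (A0*x+B0*y+D0*z)^2 * h0 + (A1*x+B1*y+D1*z)^2 * h1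

/-- On the zero set of F, if apolar to a form not apolar to (1,1,1), the sum of
coordinates vanishes. -/
lemma auxSum (P Q R A B D : ℝ) (hs : A + B + D ≠ 0)
    (hf : P^3 + Q^3 + R^3 = 3*(P*Q*R)) (h0 : P*A + Q*B + R*D = 0) :
    P + Q + R = 0 := by
  have hfac : (P + Q + R) * ((P-Q)^2 + (Q-R)^2 + (R-P)^2) = 0 := by
    linear_combination 2*hf
  rcases mul_eq_zero.mp hfac with hsum | hsq
  · exact hsum
  · have e1 : P = Q := by nlinarith [sq_nonneg (P-Q), sq_nonneg (Q-R), sq_nonneg (R-P)]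
    have e2 : Q = R := by nlinarith [sq_nonneg (P-Q), sq_nonneg (Q-R), sq_nonneg (R-P)]
    have hP0 : P * (A + B + D) = 0 := by
      linear_combination h0 + (B+D)*e1 + D*e2
    have hp : P = 0 := by
      rcases mul_eq_zero.mp hP0 with h' | h'
      · exact h'
      · exact absurd h' hs
    linear_combination -2*e1 - e2 + 3*hp

/-- Dichotomy: in a four-cube decomposition of F the first linear form is
either apolar to (1,1,1) or proportional to (1,1,1). -/
lemma dich (A0 B0 D0 A1 B1 D1 A2 B2 D2 A3 B3 D3 : ℝ)
    (h : ∀ x y z : ℝ, x^3 + y^3 + z^3 - 3*(x*y*z)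
        = (A0*x+B0*y+D0*z)^3 + (A1*x+B1*y+D1*z)^3
          + (A2*x+B2*y+D2*z)^3 + (A3*x+B3*y+D3*z)^3) :
    A0 + B0 + D0 = 0 ∨ (A0 = B0 ∧ B0 = D0) := by
  by_contra hcon
  push_neg at hcon
  obtain ⟨hs, hne⟩ := hcon
  have key := keyId A0 B0 D0 A1 B1 D1 A2 B2 D2 A3 B3 D3 h
  -- For each j : the cross product u = w0 × wj is apolar to w0 and wj, hence F(u)=0,
  -- hence (since w0 is not apolar to e and u is) deduce v·wj = 0 with v = w0 × e.
  have step : ∀ Aj Bj Dj : ℝ,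
      ((B0*Dj - D0*Bj)^3 + (D0*Aj - A0*Dj)^3 + (A0*Bj - B0*Aj)^3
        = 3*((B0*Dj - D0*Bj)*((D0*Aj - A0*Dj)*(A0*Bj - B0*Aj)))) →
      (B0 - D0)*Aj + (D0 - A0)*Bj + (A0 - B0)*Dj = 0 := by
    intro Aj Bj Dj hf
    have h0 : (B0*Dj - D0*Bj)*A0 + (D0*Aj - A0*Dj)*B0 + (A0*Bj - B0*Aj)*D0 = 0 := by ring
    have hsum := auxSum (B0*Dj - D0*Bj) (D0*Aj - A0*Dj) (A0*Bj - B0*Aj) A0 B0 D0 hs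
      (by linear_combination hf) h0
    linear_combination -hsum
  have b0 : (B0 - D0)*A0 + (D0 - A0)*B0 + (A0 - B0)*D0 = 0 := by ring
  have b1 : (B0 - D0)*A1 + (D0 - A0)*B1 + (A0 - B0)*D1 = 0 := by
    refine step A1 B1 D1 ?_
    have := pairF A0 B0 D0 A1 B1 D1 A2 B2 D2 A3 B3 D3 h
      (B0*D1 - D0*B1) (D0*A1 - A0*D1) (A0*B1 - B0*A1) (by ring) (by ring)
    linear_combination this
  have b2 : (B0 - D0)*A2 + (D0 - A0)*B2 + (A0 - B0)*D2 = 0 := by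
    refine step A2 B2 D2 ?_
    have := pairF A0 B0 D0 A2 B2 D2 A1 B1 D1 A3 B3 D3
      (fun x y z => by linear_combination h x y z)
      (B0*D2 - D0*B2) (D0*A2 - A0*D2) (A0*B2 - B0*A2) (by ring) (by ring)
    linear_combination this
  have b3 : (B0 - D0)*A3 + (D0 - A0)*B3 + (A0 - B0)*D3 = 0 := by
    refine step A3 B3 D3 ?_
    have := pairF A0 B0 D0 A3 B3 D3 A1 B1 D1 A2 B2 D2
      (fun x y z => by linear_combination h x y z)
      (B0*D3 - D0*B3) (D0*A3 - A0*D3) (A0*B3 - B0*A3) (by ring) (by ring)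
    linear_combination this
  -- v = (B0-D0, D0-A0, A0-B0) is apolar to all four forms, hence v = 0.
  have hv1 : B0 - D0 = 0 := by
    linear_combination key (B0-D0) (D0-A0) (A0-B0) 1 0 0
      + A0^2*b0 + A1^2*b1 + A2^2*b2 + A3^2*b3
  have hv2 : D0 - A0 = 0 := by
    linear_combination key (B0-D0) (D0-A0) (A0-B0) 0 1 0
      + B0^2*b0 + B1^2*b1 + B2^2*b2 + B3^2*b3
  have hv3 : A0 - B0 = 0 := by
    linear_combination key (B0-D0) (D0-A0) (A0-B0) 0 0 1
      + D0^2*b0 + D1^2*b1 + D2^2*b2 + D3^2*b3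
  exact hne (by linarith) (by linarith)

theorem real_rank_five_imaginary_triangle :
    HasTernaryCubeDecomp (fun x y z => x ^ 3 + y ^ 3 + z ^ 3 - 3 * (x * y * z)) 5 ∧
    ¬ HasTernaryCubeDecomp (fun x y z => x ^ 3 + y ^ 3 + z ^ 3 - 3 * (x * y * z)) 4 := by
  constructor
  · refine ⟨![1/48, 9/16, 1/8, 1/8, -(7/12)], ![4,0,1,1,1], ![1,1,2,0,1], ![1,1,0,2,1], ?_⟩
    intro x y z
    simp [Fin.sum_univ_five]
    ring
  · rintro ⟨c, a, b, d, h⟩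
    obtain ⟨r0, hr0⟩ := exists_cube_root (c 0)
    obtain ⟨r1, hr1⟩ := exists_cube_root (c 1)
    obtain ⟨r2, hr2⟩ := exists_cube_root (c 2)
    obtain ⟨r3, hr3⟩ := exists_cube_root (c 3)
    have h' : ∀ x y z : ℝ, x^3 + y^3 + z^3 - 3*(x*y*z)
        = ((r0*a 0)*x+(r0*b 0)*y+(r0*d 0)*z)^3 + ((r1*a 1)*x+(r1*b 1)*y+(r1*d 1)*z)^3
          + ((r2*a 2)*x+(r2*b 2)*y+(r2*d 2)*z)^3 + ((r3*a 3)*x+(r3*b 3)*y+(r3*d 3)*z)^3 := by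
      intro x y z
      have hx := h x y z
      rw [Fin.sum_univ_four] at hx
      simp only at hx
      linear_combination hx - (a 0*x + b 0*y + d 0*z)^3 * hr0
        - (a 1*x + b 1*y + d 1*z)^3 * hr1 - (a 2*x + b 2*y + d 2*z)^3 * hr2
        - (a 3*x + b 3*y + d 3*z)^3 * hr3
    have key := keyId (r0*a 0) (r0*b 0) (r0*d 0) (r1*a 1) (r1*b 1) (r1*d 1)
      (r2*a 2) (r2*b 2) (r2*d 2) (r3*a 3) (r3*b 3) (r3*d 3) h'
    have d0 := dich (r0*a 0) (r0*b 0) (r0*d 0) (r1*a 1) (r1*b 1) (r1*d 1)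
      (r2*a 2) (r2*b 2) (r2*d 2) (r3*a 3) (r3*b 3) (r3*d 3) h'
    have d1 := dich (r1*a 1) (r1*b 1) (r1*d 1) (r0*a 0) (r0*b 0) (r0*d 0)
      (r2*a 2) (r2*b 2) (r2*d 2) (r3*a 3) (r3*b 3) (r3*d 3)
      (fun x y z => by linear_combination h' x y z)
    have d2 := dich (r2*a 2) (r2*b 2) (r2*d 2) (r0*a 0) (r0*b 0) (r0*d 0)
      (r1*a 1) (r1*b 1) (r1*d 1) (r3*a 3) (r3*b 3) (r3*d 3)
      (fun x y z => by linear_combination h' x y z)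
    have d3 := dich (r3*a 3) (r3*b 3) (r3*d 3) (r0*a 0) (r0*b 0) (r0*d 0)
      (r1*a 1) (r1*b 1) (r1*d 1) (r2*a 2) (r2*b 2) (r2*d 2)
      (fun x y z => by linear_combination h' x y z)
    have t0 : ((r0*a 0)+(r0*b 0)+(r0*d 0)) * ((r0*a 0)-(r0*b 0))^2 = 0 := by
      rcases d0 with h1 | ⟨h1, h2⟩
      · rw [h1]; ring
      · rw [h1]; ring
    have t1 : ((r1*a 1)+(r1*b 1)+(r1*d 1)) * ((r1*a 1)-(r1*b 1))^2 = 0 := by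
      rcases d1 with h1 | ⟨h1, h2⟩
      · rw [h1]; ring
      · rw [h1]; ring
    have t2 : ((r2*a 2)+(r2*b 2)+(r2*d 2)) * ((r2*a 2)-(r2*b 2))^2 = 0 := by
      rcases d2 with h1 | ⟨h1, h2⟩
      · rw [h1]; ring
      · rw [h1]; ring
    have t3 : ((r3*a 3)+(r3*b 3)+(r3*d 3)) * ((r3*a 3)-(r3*b 3))^2 = 0 := by
      rcases d3 with h1 | ⟨h1, h2⟩
      · rw [h1]; ring
      · rw [h1]; ring
    have habs : (3:ℝ) = 0 := by
      linear_combination key 1 1 1 1 (-1) 0 + t0 + t1 + t2 + t3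
    norm_num at habs
end

section
/- The identity x³ + 2y³ − 6yz² = x³ − (y+z)³ − (y−z)³ + 4y³ holds, so the real cubic x³+(y+i z)³+(y−i z)³ has real Waring rank at most 4; moreover its real Waring rank is exactly 4 while its complex Waring rank is 3. -/
def HasTernaryCubeDecompK (K : Type*) [Field K] (f : K → K → K → K) (r : ℕ) : Prop :=
  ∃ (c : Fin r → K) (a b d : Fin r → K),
    ∀ x y z : K, f x y z = ∑ i, c i * (a i * x + b i * y + d i * z) ^ 3

private lemma plane_lemma (a b d : ℝ)
    (h : ∀ u1 u2 u3 : ℝ, a * u1 + b * u2 + d * u3 = 0 → u1 * (u2 ^ 2 + u3 ^ 2) = 0) :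
    b = 0 ∧ d = 0 := by
  by_cases ha : a = 0
  · have h1 := h 1 d (-b) (by rw [ha]; ring)
    constructor <;> nlinarith [sq_nonneg b, sq_nonneg d, h1]
  · have h1 := h b (-a) 0 (by ring)
    have h2 := h d 0 (-a) (by ring)
    have hb : b * a ^ 2 = 0 := by linear_combination h1
    have hd : d * a ^ 2 = 0 := by linear_combination h2
    have ha2 : a ^ 2 ≠ 0 := pow_ne_zero _ ha
    exact ⟨(mul_eq_zero.mp hb).resolve_right ha2, (mul_eq_zero.mp hd).resolve_right ha2⟩

set_option maxHeartbeats 2000000 in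
theorem imaginary_fermat_ranks :
    (∀ x y z : ℝ, x ^ 3 + 2 * y ^ 3 - 6 * y * z ^ 2 =
      x ^ 3 - (y + z) ^ 3 - (y - z) ^ 3 + 4 * y ^ 3) ∧
    (∀ x y z : ℂ, x ^ 3 + 2 * y ^ 3 - 6 * y * z ^ 2 =
      x ^ 3 + (y + Complex.I * z) ^ 3 + (y - Complex.I * z) ^ 3) ∧
    HasTernaryCubeDecompK ℝ (fun x y z => x ^ 3 + 2 * y ^ 3 - 6 * y * z ^ 2) 4 ∧
    ¬ HasTernaryCubeDecompK ℝ (fun x y z => x ^ 3 + 2 * y ^ 3 - 6 * y * z ^ 2) 3 ∧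
    HasTernaryCubeDecompK ℂ (fun x y z => x ^ 3 + 2 * y ^ 3 - 6 * y * z ^ 2) 3 ∧
    ¬ HasTernaryCubeDecompK ℂ (fun x y z => x ^ 3 + 2 * y ^ 3 - 6 * y * z ^ 2) 2 := by
  refine ⟨fun x y z => by ring, fun x y z => by linear_combination (-6*y*z^2 : ℂ) * Complex.I_sq, ?_, ?_, ?_, ?_⟩
  · refine ⟨![1, -1, -1, 4], ![1, 0, 0, 0], ![0, 1, 1, 1], ![0, 1, -1, 0], fun x y z => ?_⟩
    simp only [Fin.sum_univ_four, Matrix.cons_val_zero, Matrix.cons_val_one, Matrix.head_cons,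
      Matrix.cons_val_two, Matrix.tail_cons, Matrix.cons_val_three]
    ring
  · rintro ⟨c, a, b, d, h⟩
    simp only [Fin.sum_univ_three] at h
    have E300 : c 0 * a 0 ^ 3 + c 1 * a 1 ^ 3 + c 2 * a 2 ^ 3 = 1 := by linear_combination (-1) * h 1 0 0
    have E030 : c 0 * b 0 ^ 3 + c 1 * b 1 ^ 3 + c 2 * b 2 ^ 3 = 2 := by linear_combination (-1) * h 0 1 0
    have E003 : c 0 * d 0 ^ 3 + c 1 * d 1 ^ 3 + c 2 * d 2 ^ 3 = 0 := by linear_combination (-1) * h 0 0 1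
    have E210 : c 0 * a 0 ^ 2 * b 0 + c 1 * a 1 ^ 2 * b 1 + c 2 * a 2 ^ 2 * b 2 = 0 := by linear_combination (1/3) * h 0 1 0 - (1/6) * h 1 1 0 + (1/6) * h 1 (-1) 0
    have E201 : c 0 * a 0 ^ 2 * d 0 + c 1 * a 1 ^ 2 * d 1 + c 2 * a 2 ^ 2 * d 2 = 0 := by linear_combination (1/3) * h 0 0 1 - (1/6) * h 1 0 1 + (1/6) * h 1 0 (-1)
    have E120 : c 0 * a 0 * b 0 ^ 2 + c 1 * a 1 * b 1 ^ 2 + c 2 * a 2 * b 2 ^ 2 = 0 := by linear_combination (1/3) * h 1 0 0 - (1/6) * h 1 1 0 - (1/6) * h 1 (-1) 0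
    have E102 : c 0 * a 0 * d 0 ^ 2 + c 1 * a 1 * d 1 ^ 2 + c 2 * a 2 * d 2 ^ 2 = 0 := by linear_combination (1/3) * h 1 0 0 - (1/6) * h 1 0 1 - (1/6) * h 1 0 (-1)
    have E021 : c 0 * b 0 ^ 2 * d 0 + c 1 * b 1 ^ 2 * d 1 + c 2 * b 2 ^ 2 * d 2 = 0 := by linear_combination (1/3) * h 0 0 1 - (1/6) * h 0 1 1 + (1/6) * h 0 1 (-1)
    have E012 : c 0 * b 0 * d 0 ^ 2 + c 1 * b 1 * d 1 ^ 2 + c 2 * b 2 * d 2 ^ 2 = -2 := by linear_combination (1/3) * h 0 1 0 - (1/6) * h 0 1 1 - (1/6) * h 0 1 (-1)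
    have E111 : c 0 * a 0 * b 0 * d 0 + c 1 * a 1 * b 1 * d 1 + c 2 * a 2 * b 2 * d 2 = 0 := by linear_combination (-1/6) * (h 1 0 0 + h 0 1 0 + h 0 0 1 - h 1 1 0 - h 1 0 1 - h 0 1 1 + h 1 1 1)
    have hstar : ∀ u1 u2 u3 : ℝ, c 0 * c 1 * c 2 * (a 0 * (b 1 * d 2 - d 1 * b 2) - b 0 * (a 1 * d 2 - d 1 * a 2) + d 0 * (a 1 * b 2 - b 1 * a 2))^2 * (u1 * a 0 + u2 * b 0 + u3 * d 0) * (u1 * a 1 + u2 * b 1 + u3 * d 1) * (u1 * a 2 + u2 * b 2 + u3 * d 2) = -4 * u1 * (u2^2 + u3^2) := by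
      intro u1 u2 u3
      have hM11 : c 0 * (u1 * a 0 + u2 * b 0 + u3 * d 0) * a 0 * a 0 + c 1 * (u1 * a 1 + u2 * b 1 + u3 * d 1) * a 1 * a 1 + c 2 * (u1 * a 2 + u2 * b 2 + u3 * d 2) * a 2 * a 2 = u1 := by linear_combination u1 * E300 + u2 * E210 + u3 * E201
      have hM12 : c 0 * (u1 * a 0 + u2 * b 0 + u3 * d 0) * a 0 * b 0 + c 1 * (u1 * a 1 + u2 * b 1 + u3 * d 1) * a 1 * b 1 + c 2 * (u1 * a 2 + u2 * b 2 + u3 * d 2) * a 2 * b 2 = 0 := by linear_combination u1 * E210 + u2 * E120 + u3 * E111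
      have hM13 : c 0 * (u1 * a 0 + u2 * b 0 + u3 * d 0) * a 0 * d 0 + c 1 * (u1 * a 1 + u2 * b 1 + u3 * d 1) * a 1 * d 1 + c 2 * (u1 * a 2 + u2 * b 2 + u3 * d 2) * a 2 * d 2 = 0 := by linear_combination u1 * E201 + u2 * E111 + u3 * E102
      have hM22 : c 0 * (u1 * a 0 + u2 * b 0 + u3 * d 0) * b 0 * b 0 + c 1 * (u1 * a 1 + u2 * b 1 + u3 * d 1) * b 1 * b 1 + c 2 * (u1 * a 2 + u2 * b 2 + u3 * d 2) * b 2 * b 2 = 2*u2 := by linear_combination u1 * E120 + u2 * E030 + u3 * E021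
      have hM23 : c 0 * (u1 * a 0 + u2 * b 0 + u3 * d 0) * b 0 * d 0 + c 1 * (u1 * a 1 + u2 * b 1 + u3 * d 1) * b 1 * d 1 + c 2 * (u1 * a 2 + u2 * b 2 + u3 * d 2) * b 2 * d 2 = -2*u3 := by linear_combination u1 * E111 + u2 * E021 + u3 * E012
      have hM33 : c 0 * (u1 * a 0 + u2 * b 0 + u3 * d 0) * d 0 * d 0 + c 1 * (u1 * a 1 + u2 * b 1 + u3 * d 1) * d 1 * d 1 + c 2 * (u1 * a 2 + u2 * b 2 + u3 * d 2) * d 2 * d 2 = -2*u2 := by linear_combination u1 * E102 + u2 * E012 + u3 * E003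
      linear_combination ((c 0 * (u1 * a 0 + u2 * b 0 + u3 * d 0) * b 0 * b 0 + c 1 * (u1 * a 1 + u2 * b 1 + u3 * d 1) * b 1 * b 1 + c 2 * (u1 * a 2 + u2 * b 2 + u3 * d 2) * b 2 * b 2) * (c 0 * (u1 * a 0 + u2 * b 0 + u3 * d 0) * d 0 * d 0 + c 1 * (u1 * a 1 + u2 * b 1 + u3 * d 1) * d 1 * d 1 + c 2 * (u1 * a 2 + u2 * b 2 + u3 * d 2) * d 2 * d 2) - (c 0 * (u1 * a 0 + u2 * b 0 + u3 * d 0) * b 0 * d 0 + c 1 * (u1 * a 1 + u2 * b 1 + u3 * d 1) * b 1 * d 1 + c 2 * (u1 * a 2 + u2 * b 2 + u3 * d 2) * b 2 * d 2)^2) * hM11 - ((c 0 * (u1 * a 0 + u2 * b 0 + u3 * d 0) * a 0 * b 0 + c 1 * (u1 * a 1 + u2 * b 1 + u3 * d 1) * a 1 * b 1 + c 2 * (u1 * a 2 + u2 * b 2 + u3 * d 2) * a 2 * b 2) * (c 0 * (u1 * a 0 + u2 * b 0 + u3 * d 0) * d 0 * d 0 + c 1 * (u1 * a 1 + u2 *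 b 1 + u3 * d 1) * d 1 * d 1 + c 2 * (u1 * a 2 + u2 * b 2 + u3 * d 2) * d 2 * d 2) - (c 0 * (u1 * a 0 + u2 * b 0 + u3 * d 0) * b 0 * d 0 + c 1 * (u1 * a 1 + u2 * b 1 + u3 * d 1) * b 1 * d 1 + c 2 * (u1 * a 2 + u2 * b 2 + u3 * d 2) * b 2 * d 2) * (c 0 * (u1 * a 0 + u2 * b 0 + u3 * d 0) * a 0 * d 0 + c 1 * (u1 * a 1 + u2 * b 1 + u3 * d 1) * a 1 * d 1 + c 2 * (u1 * a 2 + u2 * b 2 + u3 * d 2) * a 2 * d 2)) * hM12 + ((c 0 * (u1 * a 0 + u2 * b 0 + u3 * d 0) * a 0 * b 0 + c 1 * (u1 * a 1 + u2 * b 1 + u3 * d 1) * a 1 * b 1 + c 2 * (u1 * a 2 + u2 * b 2 + u3 * d 2) * a 2 * b 2) * (c 0 * (u1 * a 0 + u2 * b 0 + u3 * d 0) * b 0 * d 0 + c 1 * (u1 * a 1 + u2 * b 1 + u3 * d 1) * b 1 * d 1 + c 2 * (u1 * a 2 + u2 * b 2 + u3 * d 2) * b 2 * d 2) - (c 0 *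 (u1 * a 0 + u2 * b 0 + u3 * d 0) * b 0 * b 0 + c 1 * (u1 * a 1 + u2 * b 1 + u3 * d 1) * b 1 * b 1 + c 2 * (u1 * a 2 + u2 * b 2 + u3 * d 2) * b 2 * b 2) * (c 0 * (u1 * a 0 + u2 * b 0 + u3 * d 0) * a 0 * d 0 + c 1 * (u1 * a 1 + u2 * b 1 + u3 * d 1) * a 1 * d 1 + c 2 * (u1 * a 2 + u2 * b 2 + u3 * d 2) * a 2 * d 2)) * hM13 + (u1 * (c 0 * (u1 * a 0 + u2 * b 0 + u3 * d 0) * d 0 * d 0 + c 1 * (u1 * a 1 + u2 * b 1 + u3 * d 1) * d 1 * d 1 + c 2 * (u1 * a 2 + u2 * b 2 + u3 * d 2) * d 2 * d 2)) * hM22 + (2*u1*u3 - u1 * (c 0 * (u1 * a 0 + u2 * b 0 + u3 * d 0) * b 0 * d 0 + c 1 * (u1 * a 1 + u2 * b 1 + u3 * d 1) * b 1 * d 1 + c 2 * (u1 * a 2 + u2 * b 2 + u3 * d 2) * b 2 * d 2)) * hM23 + (2*u1*u2) * hM33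
    have P0 : b 0 = 0 ∧ d 0 = 0 := by
      apply plane_lemma (a 0) (b 0) (d 0)
      intro u1 u2 u3 hu
      linear_combination (1/4) * hstar u1 u2 u3 + (-1/4) * (c 0 * c 1 * c 2 * (a 0 * (b 1 * d 2 - d 1 * b 2) - b 0 * (a 1 * d 2 - d 1 * a 2) + d 0 * (a 1 * b 2 - b 1 * a 2))^2 * (u1 * a 1 + u2 * b 1 + u3 * d 1) * (u1 * a 2 + u2 * b 2 + u3 * d 2)) * hu
    have P1 : b 1 = 0 ∧ d 1 = 0 := by
      apply plane_lemma (a 1) (b 1) (d 1)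
      intro u1 u2 u3 hu
      linear_combination (1/4) * hstar u1 u2 u3 + (-1/4) * (c 0 * c 1 * c 2 * (a 0 * (b 1 * d 2 - d 1 * b 2) - b 0 * (a 1 * d 2 - d 1 * a 2) + d 0 * (a 1 * b 2 - b 1 * a 2))^2 * (u1 * a 0 + u2 * b 0 + u3 * d 0) * (u1 * a 2 + u2 * b 2 + u3 * d 2)) * hu
    have P2 : b 2 = 0 ∧ d 2 = 0 := by
      apply plane_lemma (a 2) (b 2) (d 2)
      intro u1 u2 u3 hu
      linear_combination (1/4) * hstar u1 u2 u3 + (-1/4) * (c 0 * c 1 * c 2 * (a 0 * (b 1 * d 2 - d 1 * b 2) - b 0 * (a 1 * d 2 - d 1 * a 2) + d 0 * (a 1 * b 2 - b 1 * a 2))^2 * (u1 * a 0 + u2 * b 0 + u3 * d 0) * (u1 * a 1 + u2 * b 1 + u3 * d 1)) * hu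
    rw [P0.1, P1.1, P2.1] at E030
    norm_num at E030
  · refine ⟨![1, 1, 1], ![1, 0, 0], ![0, 1, 1], ![0, Complex.I, -Complex.I], fun x y z => ?_⟩
    simp only [Fin.sum_univ_three, Matrix.cons_val_zero, Matrix.cons_val_one, Matrix.head_cons,
      Matrix.cons_val_two, Matrix.tail_cons]
    linear_combination (-6*y*z^2 : ℂ) * Complex.I_sq
  · rintro ⟨c, a, b, d, h⟩
    simp only [Fin.sum_univ_two] at h
    have E300 : c 0 * a 0 ^ 3 + c 1 * a 1 ^ 3 = 1 := by linear_combination (-1) * h 1 0 0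
    have E030 : c 0 * b 0 ^ 3 + c 1 * b 1 ^ 3 = 2 := by linear_combination (-1) * h 0 1 0
    have E003 : c 0 * d 0 ^ 3 + c 1 * d 1 ^ 3 = 0 := by linear_combination (-1) * h 0 0 1
    have E210 : c 0 * a 0 ^ 2 * b 0 + c 1 * a 1 ^ 2 * b 1 = 0 := by linear_combination (1/3) * h 0 1 0 - (1/6) * h 1 1 0 + (1/6) * h 1 (-1) 0
    have E201 : c 0 * a 0 ^ 2 * d 0 + c 1 * a 1 ^ 2 * d 1 = 0 := by linear_combination (1/3) * h 0 0 1 - (1/6) * h 1 0 1 + (1/6) * h 1 0 (-1)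
    have E120 : c 0 * a 0 * b 0 ^ 2 + c 1 * a 1 * b 1 ^ 2 = 0 := by linear_combination (1/3) * h 1 0 0 - (1/6) * h 1 1 0 - (1/6) * h 1 (-1) 0
    have E102 : c 0 * a 0 * d 0 ^ 2 + c 1 * a 1 * d 1 ^ 2 = 0 := by linear_combination (1/3) * h 1 0 0 - (1/6) * h 1 0 1 - (1/6) * h 1 0 (-1)
    have E021 : c 0 * b 0 ^ 2 * d 0 + c 1 * b 1 ^ 2 * d 1 = 0 := by linear_combination (1/3) * h 0 0 1 - (1/6) * h 0 1 1 + (1/6) * h 0 1 (-1)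
    have E012 : c 0 * b 0 * d 0 ^ 2 + c 1 * b 1 * d 1 ^ 2 = -2 := by linear_combination (1/3) * h 0 1 0 - (1/6) * h 0 1 1 - (1/6) * h 0 1 (-1)
    have E111 : c 0 * a 0 * b 0 * d 0 + c 1 * a 1 * b 1 * d 1 = 0 := by linear_combination (-1/6) * (h 1 0 0 + h 0 1 0 + h 0 0 1 - h 1 1 0 - h 1 0 1 - h 0 1 1 + h 1 1 1)
    have hM11 : c 0 * (a 0 + b 0) * a 0 * a 0 + c 1 * (a 1 + b 1) * a 1 * a 1 = 1 := by linear_combination E300 + E210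
    have hM12 : c 0 * (a 0 + b 0) * a 0 * b 0 + c 1 * (a 1 + b 1) * a 1 * b 1 = 0 := by linear_combination E210 + E120
    have hM13 : c 0 * (a 0 + b 0) * a 0 * d 0 + c 1 * (a 1 + b 1) * a 1 * d 1 = 0 := by linear_combination E201 + E111
    have hM22 : c 0 * (a 0 + b 0) * b 0 * b 0 + c 1 * (a 1 + b 1) * b 1 * b 1 = 2 := by linear_combination E120 + E030
    have hM23 : c 0 * (a 0 + b 0) * b 0 * d 0 + c 1 * (a 1 + b 1) * b 1 * d 1 = 0 := by linear_combination E111 + E021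
    have hM33 : c 0 * (a 0 + b 0) * d 0 * d 0 + c 1 * (a 1 + b 1) * d 1 * d 1 = -2 := by linear_combination E102 + E012
    have habs : (4:ℂ) = 0 := by
      linear_combination ((c 0 * (a 0 + b 0) * b 0 * b 0 + c 1 * (a 1 + b 1) * b 1 * b 1) * (c 0 * (a 0 + b 0) * d 0 * d 0 + c 1 * (a 1 + b 1) * d 1 * d 1) - (c 0 * (a 0 + b 0) * b 0 * d 0 + c 1 * (a 1 + b 1) * b 1 * d 1)^2) * hM11 - ((c 0 * (a 0 + b 0) * a 0 * b 0 + c 1 * (a 1 + b 1) * a 1 * b 1) * (c 0 * (a 0 + b 0) * d 0 * d 0 + c 1 * (a 1 + b 1) * d 1 * d 1) - (c 0 * (a 0 + b 0) * b 0 * d 0 + c 1 * (a 1 + b 1) * b 1 * d 1) * (c 0 * (a 0 + b 0) * a 0 * d 0 + c 1 * (a 1 + b 1) * a 1 * d 1)) * hM12 + ((c 0 * (a 0 + b 0) * a 0 * b 0 + c 1 * (a 1 + b 1) * a 1 * b 1) * (c 0 * (a 0 + b 0) * b 0 * d 0 + c 1 * (a 1 + b 1) * b 1 * d 1) - (c 0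 * (a 0 + b 0) * b 0 * b 0 + c 1 * (a 1 + b 1) * b 1 * b 1) * (c 0 * (a 0 + b 0) * a 0 * d 0 + c 1 * (a 1 + b 1) * a 1 * d 1)) * hM13 + (c 0 * (a 0 + b 0) * d 0 * d 0 + c 1 * (a 1 + b 1) * d 1 * d 1) * hM22 - (c 0 * (a 0 + b 0) * b 0 * d 0 + c 1 * (a 1 + b 1) * b 1 * d 1) * hM23 + 2 * hM33
    norm_num at habs
end
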